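/- arXiv:2304.07824 — 18 statements merged into one kernel-verified Lean document; each statement's English description precedes it below -/
import Mathlib

section
/- Let X and Y be metric spaces and f : X → Y. If there exists, for each ε > 0, a countable cover (X_i) of X by closed sets such that diam f(X_i) ≤ ε for all i, then the preimage under f of every open set in Y is an F_σ set (i.e., f is Baire class 1). -/
/-- A function with the Lebesgue property (countable closed covers with small images)
is Baire class 1: preimages of open sets are Fσ. -/
theorem stmt_0 {X Y : Type*} [MetricSpace X] [MetricSpace Y] (f : X → Y)
    (h : ∀ ε : ℝ, 0 < ε → ∃ C : ℕ → Set X, (∀ i, IsClosed (C i)) ∧ (⋃ i, C i) = Set.univ ∧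
      ∀ i, ∀ x ∈ C i, ∀ y ∈ C i, dist (f x) (f y) ≤ ε) :
    ∀ U : Set Y, IsOpen U → ∃ F : ℕ → Set X, (∀ n, IsClosed (F n)) ∧ f ⁻¹' U = ⋃ n, F n := by
  intro U hU
  classical
  have hpos : ∀ n : ℕ, (0:ℝ) < 1 / (n + 1) := fun n => by positivity
  choose C hCclosed hCcover hCdiam using fun n : ℕ => h (1 / (n + 1)) (hpos n)
  refine ⟨fun k => if C k.unpair.1 k.unpair.2 ⊆ f ⁻¹' U then C k.unpair.1 k.unpair.2 else ∅,
    fun k => ?_, ?_⟩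
  · dsimp only; split <;> simp [hCclosed]
  · ext x
    simp only [Set.mem_iUnion, Set.mem_preimage]
    constructor
    · intro hx
      obtain ⟨ε, hε, hball⟩ := Metric.isOpen_iff.1 hU (f x) hx
      obtain ⟨n, hn⟩ := exists_nat_gt (1 / ε)
      have hεn : (1:ℝ) / (n + 1) < ε := by
        rw [div_lt_iff₀ (by positivity)]
        rw [div_lt_iff₀ hε] at hn
        nlinarith
      have hxcov : x ∈ ⋃ i, C n i := by rw [hCcover n]; trivial
      obtain ⟨i, hi⟩ := Set.mem_iUnion.1 hxcov
      refine ⟨Nat.pair n i, ?_⟩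
      have hsub : C n i ⊆ f ⁻¹' U := by
        intro y hy
        apply hball
        have := hCdiam n i y hy x hi
        exact Metric.mem_ball.2 (lt_of_le_of_lt this hεn)
      simp only [Nat.unpair_pair]
      rw [if_pos hsub]
      exact hi
    · rintro ⟨k, hk⟩
      by_cases hs : C k.unpair.1 k.unpair.2 ⊆ f ⁻¹' U
      · rw [if_pos hs] at hk; exact hs hk
      · rw [if_neg hs] at hk; exact absurd hk (Set.notMem_empty x)
end

section
/- Let X be a metric space and Y a separable metric space. If f : X → Y is Baire class 1 (preimages of open sets are F_σ), then for each ε > 0 there is a countable cover (X_i) of X by closed sets with diam f(X_i) ≤ ε for all i. -/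
/-- A Baire class 1 function into a separable metric space has the Lebesgue property. -/
theorem stmt_1 {X Y : Type*} [MetricSpace X] [MetricSpace Y]
    [TopologicalSpace.SeparableSpace Y] (f : X → Y)
    (h : ∀ U : Set Y, IsOpen U → ∃ F : ℕ → Set X, (∀ n, IsClosed (F n)) ∧ f ⁻¹' U = ⋃ n, F n) :
    ∀ ε : ℝ, 0 < ε → ∃ C : ℕ → Set X, (∀ i, IsClosed (C i)) ∧ (⋃ i, C i) = Set.univ ∧
      ∀ i, ∀ x ∈ C i, ∀ y ∈ C i, dist (f x) (f y) ≤ ε := by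
  intro ε hε
  by_cases hX : Nonempty X
  · have hY : Nonempty Y := ⟨f hX.some⟩
    obtain ⟨u, hu⟩ := TopologicalSpace.exists_dense_seq Y
    -- for each n, decompose preimage of ball
    choose F hFclosed hFeq using fun n =>
      h (Metric.ball (u n) (ε / 2)) Metric.isOpen_ball
    refine ⟨fun i => F (Nat.unpair i).1 (Nat.unpair i).2, fun i => hFclosed _ _, ?_, ?_⟩
    · apply Set.eq_univ_of_forall
      intro x
      obtain ⟨n, hn⟩ := hu.exists_dist_lt (f x) (half_pos hε)
      have hx : x ∈ f ⁻¹' Metric.ball (u n) (ε / 2) := by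
        simpa [Metric.mem_ball, dist_comm] using hn
      rw [hFeq n] at hx
      obtain ⟨m, hm⟩ := Set.mem_iUnion.1 hx
      exact Set.mem_iUnion.2 ⟨Nat.pair n m, by simpa using hm⟩
    · intro i x hx y hy
      have hsub : F (Nat.unpair i).1 (Nat.unpair i).2 ⊆
          f ⁻¹' Metric.ball (u (Nat.unpair i).1) (ε / 2) := by
        rw [hFeq]; exact Set.subset_iUnion _ _
      have h1 := hsub hx
      have h2 := hsub hy
      simp only [Set.mem_preimage, Metric.mem_ball] at h1 h2
      calc dist (f x) (f y) ≤ dist (f x) (u _) + dist (u _) (f y) := dist_triangle _ _ _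
        _ ≤ ε / 2 + ε / 2 := add_le_add h1.le (by rw [dist_comm]; exact h2.le)
        _ = ε := by ring
  · exact ⟨fun _ => ∅, fun _ => isClosed_empty, by
      have : IsEmpty X := not_nonempty_iff.1 hX
      simp [Set.eq_empty_of_isEmpty (Set.univ : Set X)], by simp⟩
end

section
/- Let Y be a non-separable metric space. Then the identity function id : Y → Y is Baire class 1 but does not have the Lebesgue property: there exists ε > 0 such that no countable cover of Y by closed sets X_i satisfies diam X_i ≤ ε for all i. -/
/-- On a non-separable metric space the identity is Baire class 1 but fails
the Lebesgue property. -/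
theorem stmt_3 {Y : Type*} [MetricSpace Y] (h : ¬ TopologicalSpace.SeparableSpace Y) :
    (∀ U : Set Y, IsOpen U → ∃ F : ℕ → Set Y, (∀ n, IsClosed (F n)) ∧
      (id : Y → Y) ⁻¹' U = ⋃ n, F n) ∧
    ∃ ε : ℝ, 0 < ε ∧ ¬ ∃ C : ℕ → Set Y, (∀ i, IsClosed (C i)) ∧ (⋃ i, C i) = Set.univ ∧
      ∀ i, ∀ x ∈ C i, ∀ y ∈ C i, dist x y ≤ ε := by
  constructor
  · intro U hU
    obtain ⟨F, hFc, -, hFU, -⟩ := hU.exists_iUnion_isClosed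
    exact ⟨F, hFc, by simp [hFU]⟩
  · by_contra hc
    push_neg at hc
    apply h
    -- for each n, get a countable cover with diameter ≤ 1/(n+1)
    have key : ∀ n : ℕ, ∃ C : ℕ → Set Y, (⋃ i, C i) = Set.univ ∧
        ∀ i, ∀ x ∈ C i, ∀ y ∈ C i, dist x y ≤ 1 / (n + 1) := by
      intro n
      obtain ⟨C, -, hCu, hCd⟩ := hc (1 / (n + 1)) (by positivity)
      exact ⟨C, hCu, hCd⟩
    choose C hCu hCd using key
    by_cases hne : Nonempty Y
    · obtain ⟨y0⟩ := hne
      classical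
      set s : ℕ → ℕ → Y := fun n i => if hx : (C n i).Nonempty then hx.choose else y0 with hs
      refine ⟨⟨Set.range (Function.uncurry s), Set.countable_range _, ?_⟩⟩
      rw [Metric.dense_iff]
      intro x ε hε
      obtain ⟨n, hn⟩ := exists_nat_one_div_lt hε
      have hx : x ∈ ⋃ i, C n i := (hCu n).symm ▸ Set.mem_univ x
      obtain ⟨i, hi⟩ := Set.mem_iUnion.mp hx
      have hne' : (C n i).Nonempty := ⟨x, hi⟩
      refine ⟨s n i, Metric.mem_ball'.mpr ?_, ⟨(n, i), rfl⟩⟩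
      have hsmem : s n i ∈ C n i := by simp only [hs, dif_pos hne']; exact hne'.choose_spec
      calc dist x (s n i) ≤ 1 / (n + 1) := hCd n i x hi (s n i) hsmem
        _ < ε := hn
    · exact ⟨⟨∅, Set.countable_empty, fun x => (hne ⟨x⟩).elim⟩⟩
end

section
/- Let X be a separable metric space and Y a metric space. If f : X → Y has the LTZ-property, then f has the Lebesgue property. -/
/-!
Fix a gauge `δ` witnessing the LTZ-property for `ε / 3`. The points where `δ ≥ 1 / (k + 1)`,
cut into countably many pieces of diameter `< 1 / (k + 1)` using a dense sequence, form a
countable cover of `X`. On such a piece the LTZ inequality applies to every pair, so `f` varies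
by less than `ε / 3`; a point of the closure of the piece is, by the LTZ inequality at that point,
within `ε / 3` of the piece in the image. Hence the closures of the pieces are closed sets on which
`f` varies by less than `ε`.
-/

open Metric Set TopologicalSpace

section LTZ

variable {X Y : Type*} [PseudoMetricSpace X] [PseudoMetricSpace Y] {f : X → Y} {δ : X → ℝ}
  {ε r : ℝ} {S : Set X}

theorem exists_dist_image_lt_of_mem_closure
    (hδ : ∀ x y, dist x y < min (δ x) (δ y) → dist (f x) (f y) < ε) {z : X} (hz₀ : 0 < δ z)
    (hr : 0 < r) (hSδ : ∀ w ∈ S, r ≤ δ w) (hz : z ∈ closure S) :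
    ∃ w ∈ S, dist (f z) (f w) < ε := by
  obtain ⟨w, hwS, hzw⟩ := mem_closure_iff.1 hz (min (δ z) r) (lt_min hz₀ hr)
  exact ⟨w, hwS, hδ z w (hzw.trans_le (min_le_min_left _ (hSδ w hwS)))⟩

theorem dist_image_lt_of_mem_closure
    (hδ : ∀ x y, dist x y < min (δ x) (δ y) → dist (f x) (f y) < ε) (hδ₀ : ∀ x, 0 < δ x)
    (hr : 0 < r) (hSδ : ∀ w ∈ S, r ≤ δ w) (hSr : ∀ w ∈ S, ∀ w' ∈ S, dist w w' < r)
    {x y : X} (hx : x ∈ closure S) (hy : y ∈ closure S) :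
    dist (f x) (f y) < 3 * ε := by
  obtain ⟨w, hwS, hxw⟩ := exists_dist_image_lt_of_mem_closure hδ (hδ₀ x) hr hSδ hx
  obtain ⟨w', hw'S, hyw'⟩ := exists_dist_image_lt_of_mem_closure hδ (hδ₀ y) hr hSδ hy
  have hww' : dist (f w) (f w') < ε :=
    hδ w w' ((hSr w hwS w' hw'S).trans_le (le_min (hSδ w hwS) (hSδ w' hw'S)))
  calc dist (f x) (f y) ≤ dist (f x) (f w) + dist (f w) (f w') + dist (f w') (f y) :=
        dist_triangle4 _ _ _ _
    _ < ε + ε + ε := by linarith [dist_comm (f w') (f y)]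
    _ = 3 * ε := by ring

end LTZ

theorem dist_lt_of_mem_ball_half {X : Type*} [PseudoMetricSpace X] {c x y : X} {r : ℝ}
    (hx : x ∈ ball c (r / 2)) (hy : y ∈ ball c (r / 2)) : dist x y < r := by
  rw [mem_ball] at hx hy
  linarith [dist_triangle_right x y c]

theorem iUnion_ball_inter_gauge_ge_eq_univ {X : Type*} [PseudoMetricSpace X] {u : ℕ → X}
    (hu : DenseRange u) {δ : X → ℝ} (hδ₀ : ∀ x, 0 < δ x) :
    ⋃ p : ℕ × ℕ, {z | 1 / (p.1 + 1 : ℝ) ≤ δ z} ∩ ball (u p.2) (1 / (p.1 + 1) / 2) = univ := by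
  refine eq_univ_of_forall fun x => ?_
  obtain ⟨k, hk⟩ := exists_nat_one_div_lt (hδ₀ x)
  obtain ⟨n, hn⟩ := hu.exists_dist_lt x (by positivity : (0 : ℝ) < 1 / (k + 1) / 2)
  exact mem_iUnion.2 ⟨(k, n), hk.le, mem_ball.2 hn⟩

/-- On a separable metric space, the LTZ-property implies the Lebesgue property. -/
theorem stmt_4 {X Y : Type*} [MetricSpace X] [TopologicalSpace.SeparableSpace X]
    [MetricSpace Y] (f : X → Y)
    (h : ∀ ε : ℝ, 0 < ε → ∃ δ : X → ℝ, (∀ x, 0 < δ x) ∧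
      ∀ x y : X, dist x y < min (δ x) (δ y) → dist (f x) (f y) < ε) :
    ∀ ε : ℝ, 0 < ε → ∃ C : ℕ → Set X, (∀ i, IsClosed (C i)) ∧ (⋃ i, C i) = Set.univ ∧
      ∀ i, ∀ x ∈ C i, ∀ y ∈ C i, dist (f x) (f y) ≤ ε := by
  intro ε hε
  rcases isEmpty_or_nonempty X with hX | hX
  · exact ⟨fun _ => ∅, fun _ => isClosed_empty, eq_univ_of_forall isEmptyElim, by simp⟩
  obtain ⟨δ, hδ₀, hδ⟩ := h (ε / 3) (by positivity)
  set S : ℕ × ℕ → Set X := fun p =>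
    {z | 1 / (p.1 + 1 : ℝ) ≤ δ z} ∩ ball (denseSeq X p.2) (1 / (p.1 + 1) / 2)
  refine ⟨fun i => closure (S i.unpair), fun _ => isClosed_closure, ?_, ?_⟩
  · refine eq_univ_of_subset (iUnion_mono fun i => subset_closure) ?_
    rw [Nat.surjective_unpair.iUnion_comp S]
    exact iUnion_ball_inter_gauge_ge_eq_univ (denseRange_denseSeq X) hδ₀
  · intro i x hx y hy
    have := dist_image_lt_of_mem_closure hδ hδ₀ (by positivity) (fun _ hw => hw.1)
      (fun _ hw _ hw' => dist_lt_of_mem_ball_half hw.2 hw'.2) hx hy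
    linarith
end

section
/- Let X and Y be metric spaces. If f : X → Y has the Lebesgue property, then f has the LTZ-property. -/
/-- The Lebesgue property implies the LTZ-property. -/
theorem stmt_5 {X Y : Type*} [MetricSpace X] [MetricSpace Y] (f : X → Y)
    (h : ∀ ε : ℝ, 0 < ε → ∃ C : ℕ → Set X, (∀ i, IsClosed (C i)) ∧ (⋃ i, C i) = Set.univ ∧
      ∀ i, ∀ x ∈ C i, ∀ y ∈ C i, dist (f x) (f y) ≤ ε) :
    ∀ ε : ℝ, 0 < ε → ∃ δ : X → ℝ, (∀ x, 0 < δ x) ∧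
      ∀ x y : X, dist x y < min (δ x) (δ y) → dist (f x) (f y) < ε := by
  classical
  intro ε hε
  obtain ⟨C, hcl, hcov, hosc⟩ := h (ε / 2) (by linarith)
  have hex : ∀ x : X, ∃ i, x ∈ C i := fun x =>
    Set.mem_iUnion.mp (hcov ▸ Set.mem_univ x)
  have key : ∀ x : X, ∃ d : ℝ, 0 < d ∧
      ∀ z, dist x z < d → ∀ k < Nat.find (hex x), z ∉ C k := by
    intro x
    have hF : IsClosed (⋃ k ∈ Finset.range (Nat.find (hex x)), C k) :=
      Set.Finite.isClosed_biUnion (Finset.range (Nat.find (hex x))).finite_toSet (fun k _ => hcl k)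
    have hxF : x ∉ ⋃ k ∈ Finset.range (Nat.find (hex x)), C k := by
      intro hx
      obtain ⟨k, hk, hxk⟩ := Set.mem_iUnion₂.mp hx
      exact Nat.find_min (hex x) (Finset.mem_range.mp hk) hxk
    obtain ⟨d, hd, hball⟩ := Metric.mem_nhds_iff.mp (hF.isOpen_compl.mem_nhds hxF)
    refine ⟨d, hd, fun z hz k hk hzk => ?_⟩
    have hzb : z ∈ Metric.ball x d := Metric.mem_ball'.mpr hz
    exact hball hzb (Set.mem_iUnion₂.mpr ⟨k, Finset.mem_range.mpr hk, hzk⟩)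
  choose δ hδpos hδ using key
  refine ⟨δ, hδpos, fun x y hxy => ?_⟩
  have h1 : dist x y < δ x := lt_of_lt_of_le hxy (min_le_left _ _)
  have h2 : dist y x < δ y := by
    rw [dist_comm]; exact lt_of_lt_of_le hxy (min_le_right _ _)
  have hnxy : Nat.find (hex x) = Nat.find (hex y) := by
    rcases lt_trichotomy (Nat.find (hex x)) (Nat.find (hex y)) with hlt | heq | hgt
    · exact absurd (Nat.find_spec (hex x)) (hδ y x h2 _ hlt)
    · exact heq
    · exact absurd (Nat.find_spec (hex y)) (hδ x y h1 _ hgt)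
  have hxm : x ∈ C (Nat.find (hex x)) := Nat.find_spec (hex x)
  have hym : y ∈ C (Nat.find (hex x)) := hnxy ▸ Nat.find_spec (hex y)
  calc dist (f x) (f y) ≤ ε / 2 := hosc _ x hxm y hym
    _ < ε := by linarith
end

section
/- Let X be a metric space such that for every metric space Y, every function f : X → Y with the LTZ-property has the Lebesgue property. Then X is separable. -/
universe u

/-- If every function from `X` (into any metric space) with the LTZ-property has the
Lebesgue property, then `X` is separable. -/
theorem stmt_6 {X : Type u} [MetricSpace X]
    (h : ∀ (Y : Type u) (_ : MetricSpace Y) (f : X → Y),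
      (∀ ε : ℝ, 0 < ε → ∃ δ : X → ℝ, (∀ x, 0 < δ x) ∧
        ∀ x y : X, dist x y < min (δ x) (δ y) → dist (f x) (f y) < ε) →
      (∀ ε : ℝ, 0 < ε → ∃ C : ℕ → Set X, (∀ i, IsClosed (C i)) ∧ (⋃ i, C i) = Set.univ ∧
        ∀ i, ∀ x ∈ C i, ∀ y ∈ C i, dist (f x) (f y) ≤ ε)) :
    TopologicalSpace.SeparableSpace X := by
  classical
  have key : ∀ n : ℕ, ∃ C : ℕ → Set X, (⋃ i, C i) = Set.univ ∧
      ∀ i, ∀ x ∈ C i, ∀ y ∈ C i, dist x y ≤ 1 / (n + 1) := by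
    intro n
    have ltz : ∀ ε : ℝ, 0 < ε → ∃ δ : X → ℝ, (∀ x, 0 < δ x) ∧
        ∀ x y : X, dist x y < min (δ x) (δ y) → dist (id x) (id y) < ε := by
      intro ε hε
      exact ⟨fun _ => ε, fun _ => hε, fun x y hxy => by simpa using hxy⟩
    obtain ⟨C, -, hcov, hd⟩ := h X ‹_› id ltz (1 / (n + 1)) (by positivity)
    exact ⟨C, hcov, hd⟩
  choose C hcov hd using key
  set s : Set X := ⋃ n, ⋃ i,
    (if hne : (C n i).Nonempty then {hne.some} else (∅ : Set X)) with hs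
  have hcount : s.Countable := by
    apply Set.countable_iUnion
    intro n
    apply Set.countable_iUnion
    intro i
    split <;> simp
  refine ⟨⟨s, hcount, ?_⟩⟩
  rw [Metric.dense_iff]
  intro x r hr
  obtain ⟨n, hn⟩ := exists_nat_one_div_lt hr
  have hx : x ∈ ⋃ i, C n i := by rw [hcov]; trivial
  obtain ⟨i, hi⟩ := Set.mem_iUnion.mp hx
  have hne : (C n i).Nonempty := ⟨x, hi⟩
  refine ⟨hne.some, ?_, ?_⟩
  · rw [Metric.mem_ball]
    calc dist hne.some x ≤ 1 / (n + 1) := hd n i _ hne.some_mem _ hi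
      _ < r := by exact_mod_cast hn
  · rw [hs]
    refine Set.mem_iUnion.mpr ⟨n, Set.mem_iUnion.mpr ⟨i, ?_⟩⟩
    rw [dif_pos hne]
    rfl
end

section
/- Let X and Y be metric spaces and F a family of functions from X to Y. If F is equi-Lebesgue, then F is equi-Baire 1. -/
/-- Every equi-Lebesgue family is equi-Baire 1. -/
theorem stmt_7 {X Y : Type*} [MetricSpace X] [MetricSpace Y] (F : Set (X → Y))
    (h : ∀ ε : ℝ, 0 < ε → ∃ C : ℕ → Set X, (∀ i, IsClosed (C i)) ∧ (⋃ i, C i) = Set.univ ∧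
      ∀ f ∈ F, ∀ i, ∀ x ∈ C i, ∀ y ∈ C i, dist (f x) (f y) ≤ ε) :
    ∀ ε : ℝ, 0 < ε → ∃ δ : X → ℝ, (∀ x, 0 < δ x) ∧
      ∀ f ∈ F, ∀ x y : X, dist x y < min (δ x) (δ y) → dist (f x) (f y) ≤ ε := by
  classical
  intro ε hε
  obtain ⟨C, hCclosed, hCcover, hC⟩ := h ε hε
  have hex : ∀ x : X, ∃ i, x ∈ C i := by
    intro x
    have : x ∈ ⋃ i, C i := hCcover ▸ Set.mem_univ x
    exact Set.mem_iUnion.mp this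
  set n : X → ℕ := fun x => Nat.find (hex x) with hn
  have hnmem : ∀ x, x ∈ C (n x) := fun x => Nat.find_spec (hex x)
  have hnmin : ∀ x, ∀ i < n x, x ∉ C i := fun x i hi => Nat.find_min (hex x) hi
  set g : X → ℕ → ℝ := fun x i =>
    if x ∈ C i ∨ ¬(C i).Nonempty then 1 else Metric.infDist x (C i) with hg
  have hgpos : ∀ x i, 0 < g x i := by
    intro x i
    simp only [hg]
    split_ifs with hcase
    · exact one_pos
    · push_neg at hcase
      exact ((hCclosed i).notMem_iff_infDist_pos hcase.2).mp hcase.1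
  set δ : X → ℝ := fun x => (Finset.range (n x + 1)).inf' Finset.nonempty_range_add_one (g x)
    with hδ
  refine ⟨δ, ?_, ?_⟩
  · intro x
    rw [hδ, Finset.lt_inf'_iff]
    intro i _
    exact hgpos x i
  · have key : ∀ f ∈ F, ∀ x y : X, n x ≤ n y → dist x y < min (δ x) (δ y) →
        dist (f x) (f y) ≤ ε := by
      intro f hf x y hle hd
      rcases lt_or_eq_of_le hle with hlt | heq
      · exfalso
        have hynot : y ∉ C (n x) := hnmin y (n x) hlt
        have hne : (C (n x)).Nonempty := ⟨x, hnmem x⟩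
        have h1 : δ y ≤ g y (n x) :=
          Finset.inf'_le _ (Finset.mem_range.mpr (by omega))
        have h2 : g y (n x) = Metric.infDist y (C (n x)) := by
          simp only [hg]
          rw [if_neg]; push_neg; exact ⟨hynot, hne⟩
        have h3 : Metric.infDist y (C (n x)) ≤ dist y x :=
          Metric.infDist_le_dist_of_mem (hnmem x)
        have := lt_of_lt_of_le (lt_of_lt_of_le hd (min_le_right _ _))
          (h1.trans (h2 ▸ h3))
        rw [dist_comm] at this
        exact lt_irrefl _ this
      · exact hC f hf (n x) x (hnmem x) y (heq ▸ hnmem y)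
    intro f hf x y hd
    rcases le_total (n x) (n y) with hle | hle
    · exact key f hf x y hle hd
    · rw [dist_comm]
      rw [dist_comm, min_comm] at hd
      exact key f hf y x hle hd
end

section
/- Let X be a separable metric space, Y a metric space, and F a family of functions from X to Y. If F is equi-Baire 1, then F is equi-Lebesgue. -/
/-- On a separable metric space, every equi-Baire 1 family is equi-Lebesgue. -/
theorem stmt_8 {X Y : Type*} [MetricSpace X] [TopologicalSpace.SeparableSpace X]
    [MetricSpace Y] (F : Set (X → Y))
    (h : ∀ ε : ℝ, 0 < ε → ∃ δ : X → ℝ, (∀ x, 0 < δ x) ∧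
      ∀ f ∈ F, ∀ x y : X, dist x y < min (δ x) (δ y) → dist (f x) (f y) ≤ ε) :
    ∀ ε : ℝ, 0 < ε → ∃ C : ℕ → Set X, (∀ i, IsClosed (C i)) ∧ (⋃ i, C i) = Set.univ ∧
      ∀ f ∈ F, ∀ i, ∀ x ∈ C i, ∀ y ∈ C i, dist (f x) (f y) ≤ ε := by
  intro ε hε
  rcases isEmpty_or_nonempty X with hX | hX
  · refine ⟨fun _ => ∅, fun _ => isClosed_empty, ?_, ?_⟩
    · simp [Set.iUnion_empty, Set.eq_empty_of_isEmpty (Set.univ : Set X)]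
    · intro f _ i x hx; exact absurd hx (by simp)
  obtain ⟨δ, hδpos, hδ⟩ := h (ε / 3) (by linarith)
  set u := TopologicalSpace.denseSeq X with hu
  have hdense := TopologicalSpace.denseRange_denseSeq X
  -- core sets
  set s : ℕ → ℝ := fun n => 1 / ((n : ℝ) + 1) with hs
  have hspos : ∀ n, 0 < s n := fun n => by positivity
  set D : ℕ → ℕ → Set X := fun n k =>
    closure ({x | s n < δ x} ∩ Metric.closedBall (u k) (s n / 4)) with hD
  refine ⟨fun i => D (Nat.unpair i).1 (Nat.unpair i).2, fun i => isClosed_closure, ?_, ?_⟩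
  · -- cover
    apply Set.eq_univ_of_forall
    intro x
    obtain ⟨n, hn⟩ := exists_nat_one_div_lt (hδpos x)
    have : x ∈ closure (Set.range u) := by
      rw [hdense.closure_range]; trivial
    obtain ⟨b, ⟨k, rfl⟩, hb⟩ := Metric.mem_closure_iff.1 this (s n / 4)
      (by positivity)
    refine Set.mem_iUnion.2 ⟨Nat.pair n k, ?_⟩
    simp only [Nat.unpair_pair]
    exact subset_closure ⟨hn, Metric.mem_closedBall.2 hb.le⟩
  · intro f hf i x hx y hy
    set n := (Nat.unpair i).1
    set k := (Nat.unpair i).2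
    have hget : ∀ z : X, z ∈ D n k → ∃ z' : X, (s n < δ z' ∧ z' ∈ Metric.closedBall (u k) (s n / 4)) ∧
        dist z z' < min (δ z) (s n) := by
      intro z hz
      obtain ⟨z', hz', hd⟩ := Metric.mem_closure_iff.1 hz (min (δ z) (s n))
        (lt_min (hδpos z) (hspos n))
      exact ⟨z', hz', hd⟩
    obtain ⟨x', ⟨hx'δ, hx'b⟩, hx'd⟩ := hget x hx
    obtain ⟨y', ⟨hy'δ, hy'b⟩, hy'd⟩ := hget y hy
    have h1 : dist (f x) (f x') ≤ ε / 3 := by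
      apply hδ f hf
      exact lt_min (lt_of_lt_of_le hx'd (min_le_left _ _))
        (lt_of_lt_of_le hx'd ((min_le_right _ _).trans hx'δ.le))
    have h2 : dist (f y) (f y') ≤ ε / 3 := by
      apply hδ f hf
      exact lt_min (lt_of_lt_of_le hy'd (min_le_left _ _))
        (lt_of_lt_of_le hy'd ((min_le_right _ _).trans hy'δ.le))
    have h3 : dist (f x') (f y') ≤ ε / 3 := by
      apply hδ f hf
      have hxy : dist x' y' ≤ s n / 2 := by
        calc dist x' y' ≤ dist x' (u k) + dist (u k) y' := dist_triangle _ _ _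
        _ ≤ s n / 4 + s n / 4 := by
            rw [dist_comm (u k) y']
            exact add_le_add (Metric.mem_closedBall.1 hx'b) (Metric.mem_closedBall.1 hy'b)
        _ = s n / 2 := by ring
      have : dist x' y' < s n := lt_of_le_of_lt hxy (by linarith [hspos n])
      exact lt_min (this.trans hx'δ) (this.trans hy'δ)
    calc dist (f x) (f y) ≤ dist (f x) (f x') + dist (f x') (f y') + dist (f y') (f y) :=
          dist_triangle4 _ _ _ _
      _ ≤ ε / 3 + ε / 3 + ε / 3 := by
          rw [dist_comm (f y') (f y)]; exact add_le_add (add_le_add h1 h3) h2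
      _ = ε := by ring
end

section
/- Let X and Y be metric spaces, (f_n) a sequence of functions X → Y forming an equi-Lebesgue family, and f : X → Y a pointwise limit of (f_n). Then f is Baire class 1. -/
/-- A pointwise limit of an equi-Lebesgue sequence is Baire class 1. -/
theorem stmt_10 {X Y : Type*} [MetricSpace X] [MetricSpace Y] (f : ℕ → X → Y) (g : X → Y)
    (h : ∀ ε : ℝ, 0 < ε → ∃ C : ℕ → Set X, (∀ i, IsClosed (C i)) ∧ (⋃ i, C i) = Set.univ ∧
      ∀ n : ℕ, ∀ i, ∀ x ∈ C i, ∀ y ∈ C i, dist (f n x) (f n y) ≤ ε)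
    (hlim : ∀ x : X, Filter.Tendsto (fun n => f n x) Filter.atTop (nhds (g x))) :
    ∀ U : Set Y, IsOpen U → ∃ F : ℕ → Set X, (∀ n, IsClosed (F n)) ∧ g ⁻¹' U = ⋃ n, F n := by
  classical
  intro U hU
  choose C hCclosed hCcover hCdiam using fun k : ℕ =>
    h (1 / (k + 1)) (by positivity)
  set P : ℕ × ℕ × ℕ → Prop := fun p =>
    ∀ m ≥ p.2.1, ∀ z ∈ C p.1 p.2.2, ∀ w ∉ U, 1 / ((p.1 : ℝ) + 1) ≤ dist (f m z) w with hP
  set F : ℕ × ℕ × ℕ → Set X := fun p => if P p then C p.1 p.2.2 else ∅ with hF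
  have key : g ⁻¹' U = ⋃ p, F p := by
    ext x
    simp only [Set.mem_preimage, Set.mem_iUnion]
    constructor
    · intro hx
      obtain ⟨δ, hδ, hball⟩ := Metric.isOpen_iff.1 hU _ hx
      obtain ⟨k, hk⟩ : ∃ k : ℕ, 1 / ((k : ℝ) + 1) < δ / 3 :=
        exists_nat_one_div_lt (by linarith)
      obtain ⟨n, hn⟩ := (Metric.tendsto_atTop.1 (hlim x) (1 / ((k : ℝ) + 1))
        (by positivity))
      have hxmem : x ∈ ⋃ i, C k i := (hCcover k).symm ▸ Set.mem_univ x
      obtain ⟨i, hi⟩ := Set.mem_iUnion.1 hxmem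
      refine ⟨(k, n, i), ?_⟩
      have hPk : P (k, n, i) := by
        intro m hm z hz w hw
        have h1 : dist (f m x) (g x) < 1 / ((k : ℝ) + 1) := hn m hm
        have h2 : dist (f m z) (f m x) ≤ 1 / ((k : ℝ) + 1) := hCdiam k m i z hz x hi
        have h3 : δ ≤ dist (g x) w := by
          by_contra hlt
          exact hw (hball (by simpa [Metric.mem_ball, dist_comm] using not_le.1 hlt))
        have h4 : dist (g x) w ≤ dist (g x) (f m x) + dist (f m x) (f m z) + dist (f m z) w :=
          dist_triangle4 _ _ _ _
        have := dist_comm (f m x) (g x) ▸ h1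
        have := dist_comm (f m x) (f m z) ▸ h2
        linarith
      simp only [hF, if_pos hPk]
      exact hi
    · rintro ⟨p, hp⟩
      by_cases hPp : P p
      · have hxC : x ∈ C p.1 p.2.2 := by simpa [hF, if_pos hPp] using hp
        by_contra hgU
        have hlimd : Filter.Tendsto (fun m => dist (f m x) (g x)) Filter.atTop (nhds 0) := by
          simpa [Metric.tendsto_atTop, dist_eq_zero] using
            (Metric.tendsto_nhds.1 (hlim x) : _)
        have hled : ∀ m ≥ p.2.1, 1 / ((p.1 : ℝ) + 1) ≤ dist (f m x) (g x) :=
          fun m hm => hPp m hm x hxC (g x) hgU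
        have hd : Filter.Tendsto (fun m => dist (f m x) (g x)) Filter.atTop
            (nhds (dist (g x) (g x))) := (hlim x).dist tendsto_const_nhds
        have : 1 / ((p.1 : ℝ) + 1) ≤ dist (g x) (g x) := by
          refine ge_of_tendsto hd ?_
          filter_upwards [Filter.eventually_ge_atTop p.2.1] with m hm
          exact hled m hm
        rw [dist_self] at this
        have : (0 : ℝ) < 1 / ((p.1 : ℝ) + 1) := by positivity
        linarith
      · simp [hF, if_neg hPp] at hp
  refine ⟨fun n => F ((Denumerable.eqv (ℕ × ℕ × ℕ)).symm n), fun n => ?_, ?_⟩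
  · by_cases hPp : P ((Denumerable.eqv (ℕ × ℕ × ℕ)).symm n)
    · simpa [hF, if_pos hPp] using hCclosed _ _
    · simp [hF, if_neg hPp]
  · rw [key, ← (Denumerable.eqv (ℕ × ℕ × ℕ)).symm.surjective.iUnion_comp F]
end

section
/- Let X be a metric space and A a nonempty family of pairwise disjoint subsets of X. The family of characteristic functions {χ_A : A ∈ A} (into ℝ) is equi-Lebesgue if and only if A is countable, each element of A is F_σ, and the union ⋃A is G_δ. -/
/-- A set is Fσ if it is a countable union of closed sets. -/
def IsFsigma {X : Type*} [TopologicalSpace X] (s : Set X) : Prop :=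
  ∃ F : ℕ → Set X, (∀ n, IsClosed (F n)) ∧ s = ⋃ n, F n

open Set

/-- For a nonempty pairwise disjoint family `𝒜`, the family of indicator functions
is equi-Lebesgue iff `𝒜` is countable, each member is Fσ, and `⋃₀ 𝒜` is Gδ. -/
theorem stmt_11 {X : Type*} [MetricSpace X] (𝒜 : Set (Set X)) (hne : 𝒜.Nonempty)
    (hdisj : 𝒜.Pairwise fun A B => Disjoint A B) :
    (∀ ε : ℝ, 0 < ε → ∃ C : ℕ → Set X, (∀ i, IsClosed (C i)) ∧ (⋃ i, C i) = Set.univ ∧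
      ∀ A ∈ 𝒜, ∀ i, ∀ x ∈ C i, ∀ y ∈ C i,
        dist (A.indicator (fun _ => (1 : ℝ)) x) (A.indicator (fun _ => (1 : ℝ)) y) ≤ ε) ↔
    (𝒜.Countable ∧ (∀ A ∈ 𝒜, IsFsigma A) ∧ IsGδ (⋃₀ 𝒜)) := by
  classical
  constructor
  · intro h
    obtain ⟨C, hCcl, hCun, hC⟩ := h (1/2) (by norm_num)
    -- key dichotomy: each C i is contained in A or disjoint from A
    have key : ∀ A ∈ 𝒜, ∀ i, C i ⊆ A ∨ Disjoint (C i) A := by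
      intro A hA i
      by_cases hd : Disjoint (C i) A
      · exact Or.inr hd
      · left
        rw [Set.not_disjoint_iff] at hd
        obtain ⟨y, hyC, hyA⟩ := hd
        intro x hx
        by_contra hxA
        have h2 := hC A hA i x hx y hyC
        rw [Set.indicator_of_notMem hxA, Set.indicator_of_mem hyA, Real.dist_eq] at h2
        norm_num at h2
    have hmem : ∀ x : X, ∃ i, x ∈ C i := by
      intro x
      have : x ∈ ⋃ i, C i := hCun ▸ Set.mem_univ x
      exact Set.mem_iUnion.1 this
    refine ⟨?_, ?_, ?_⟩
    · -- countable
      have hsub : ∀ A : {A // A ∈ 𝒜 ∧ A.Nonempty}, ∃ i, (C i).Nonempty ∧ C i ⊆ A.1 := by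
        rintro ⟨A, hA, x, hx⟩
        obtain ⟨i, hi⟩ := hmem x
        rcases key A hA i with h' | h'
        · exact ⟨i, ⟨x, hi⟩, h'⟩
        · exact absurd hx (Set.disjoint_left.1 h' hi)
      choose φ hφne hφsub using hsub
      have hinj : Function.Injective φ := by
        rintro ⟨A, hA, hAne⟩ ⟨B, hB, hBne⟩ hAB
        obtain ⟨z, hz⟩ := hφne ⟨A, hA, hAne⟩
        have hzA : z ∈ A := hφsub ⟨A, hA, hAne⟩ hz
        have hzB : z ∈ B := hφsub ⟨B, hB, hBne⟩ (hAB ▸ hz)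
        have : A = B := by
          by_contra hne'
          exact Set.disjoint_left.1 (hdisj hA hB hne') hzA hzB
        exact Subtype.ext this
      have hc1 : ({A ∈ 𝒜 | A.Nonempty} : Set (Set X)).Countable :=
        Set.countable_iff_exists_injective.2 ⟨φ, hinj⟩
      have : 𝒜 ⊆ {A ∈ 𝒜 | A.Nonempty} ∪ {∅} := by
        intro A hA
        rcases Set.eq_empty_or_nonempty A with rfl | hAne
        · exact Or.inr rfl
        · exact Or.inl ⟨hA, hAne⟩
      exact Set.Countable.mono this (hc1.union (Set.countable_singleton _))
    · -- Fσ
      intro A hA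
      refine ⟨fun n => if C n ⊆ A then C n else ∅, fun n => ?_, ?_⟩
      · by_cases h' : C n ⊆ A
        · simpa [h'] using hCcl n
        · simp [h']
      · apply Set.Subset.antisymm
        · intro x hx
          obtain ⟨i, hi⟩ := hmem x
          have hsub : C i ⊆ A := by
            rcases key A hA i with h' | h'
            · exact h'
            · exact absurd hx (Set.disjoint_left.1 h' hi)
          exact Set.mem_iUnion.2 ⟨i, by simp [hsub, hi]⟩
        · intro x hx
          obtain ⟨i, hi⟩ := Set.mem_iUnion.1 hx
          by_cases h' : C i ⊆ A
          · exact h' (by simpa [h'] using hi)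
          · simp [h'] at hi
    · -- Gδ
      rw [isGδ_iff_eq_iInter_nat]
      refine ⟨fun n => (if C n ⊆ (⋃₀ 𝒜)ᶜ then C n else ∅)ᶜ, fun n => ?_, ?_⟩
      · by_cases h' : C n ⊆ (⋃₀ 𝒜)ᶜ
        · simpa [h'] using (hCcl n).isOpen_compl
        · simp [h']
      · ext x
        simp only [Set.mem_iInter, Set.mem_compl_iff]
        constructor
        · intro hx n hxn
          by_cases h' : C n ⊆ (⋃₀ 𝒜)ᶜ
          · rw [if_pos h'] at hxn; exact h' hxn hx
          · rw [if_neg h'] at hxn; exact absurd hxn (Set.notMem_empty x)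
        · intro hx
          by_contra hxU
          obtain ⟨i, hi⟩ := hmem x
          have hsub : C i ⊆ (⋃₀ 𝒜)ᶜ := by
            intro z hz hzU
            obtain ⟨A, hA, hzA⟩ := hzU
            rcases key A hA i with h' | h'
            · exact hxU ⟨A, hA, h' hi⟩
            · exact Set.disjoint_left.1 h' hz hzA
          exact hx i (by rw [if_pos hsub]; exact hi)
  · rintro ⟨hcount, hFs, hGd⟩ ε hε
    obtain ⟨f, hf⟩ := Set.Countable.exists_eq_range hcount hne
    have hfmem : ∀ n, f n ∈ 𝒜 := fun n => hf ▸ Set.mem_range_self n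
    choose F hFcl hFeq using fun n => hFs (f n) (hfmem n)
    obtain ⟨g, hgopen, hgeq⟩ := isGδ_iff_eq_iInter_nat.1 hGd
    -- combined family over ℕ ⊕ ℕ × ℕ
    set G : ℕ ⊕ ℕ × ℕ → Set X := Sum.elim (fun m => (g m)ᶜ) (fun p => F p.1 p.2) with hG
    set e : ℕ ⊕ ℕ × ℕ ≃ ℕ := Denumerable.eqv (ℕ ⊕ ℕ × ℕ) with he
    have hcl : ∀ s, IsClosed (G s) := by
      rintro (m | ⟨a, b⟩)
      · exact (hgopen m).isClosed_compl
      · exact hFcl a b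
    refine ⟨fun n => G (e.symm n), fun n => hcl _, ?_, ?_⟩
    · rw [e.symm.surjective.iUnion_comp G]
      apply Set.eq_univ_of_forall
      intro x
      by_cases hx : x ∈ ⋃₀ 𝒜
      · obtain ⟨A, hA, hxA⟩ := hx
        rw [hf] at hA
        obtain ⟨n, hn⟩ := hA
        have : x ∈ ⋃ k, F n k := by rw [← hFeq n, hn]; exact hxA
        obtain ⟨k, hk⟩ := Set.mem_iUnion.1 this
        exact Set.mem_iUnion.2 ⟨Sum.inr (n, k), hk⟩
      · have : x ∉ ⋂ m, g m := by rwa [← hgeq]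
        obtain ⟨m, hm⟩ := by simpa [Set.mem_iInter] using this
        exact Set.mem_iUnion.2 ⟨Sum.inl m, hm⟩
    · intro A hA i x hx y hy
      have hconstall : ∀ s, G s ⊆ A ∨ G s ⊆ Aᶜ := by
        rintro (m | ⟨a, b⟩)
        · right
          intro z hz
          intro hzA
          have hzU : z ∈ ⋃₀ 𝒜 := ⟨A, hA, hzA⟩
          rw [hgeq] at hzU
          exact hz (Set.mem_iInter.1 hzU m)
        · have hsub : F a b ⊆ f a := by rw [hFeq a]; exact Set.subset_iUnion _ b
          by_cases hAf : A = f a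
          · left; rw [hAf]; exact hsub
          · right
            intro z hz hzA
            exact Set.disjoint_left.1 (hdisj hA (hfmem a) hAf) hzA (hsub hz)
      have hconst := hconstall (e.symm i)
      have : A.indicator (fun _ => (1:ℝ)) x = A.indicator (fun _ => (1:ℝ)) y := by
        rcases hconst with h' | h'
        · rw [Set.indicator_of_mem (h' hx), Set.indicator_of_mem (h' hy)]
        · rw [Set.indicator_of_notMem (h' hx), Set.indicator_of_notMem (h' hy)]
      rw [this, dist_self]
      exact le_of_lt hε
end

section
/- Let X, Y be metric spaces and (f_n) a sequence of functions X → Y forming an equi-Lebesgue family. If for every x ∈ X the closure of {f_n(x) : n ∈ ℕ} is compact in Y, then there exists a subsequence (f_{n_k}) converging pointwise on X to a Baire class 1 function. -/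
open Filter Topology Metric

/-- An equi-Lebesgue sequence with pointwise relatively compact values has a
subsequence converging pointwise to a Baire class 1 function. -/
theorem stmt_12 {X Y : Type*} [MetricSpace X] [MetricSpace Y] (f : ℕ → X → Y)
    (h : ∀ ε : ℝ, 0 < ε → ∃ C : ℕ → Set X, (∀ i, IsClosed (C i)) ∧ (⋃ i, C i) = Set.univ ∧
      ∀ n : ℕ, ∀ i, ∀ x ∈ C i, ∀ y ∈ C i, dist (f n x) (f n y) ≤ ε)
    (hcpt : ∀ x : X, IsCompact (closure {y : Y | ∃ n : ℕ, y = f n x})) :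
    ∃ φ : ℕ → ℕ, StrictMono φ ∧ ∃ g : X → Y,
      (∀ x : X, Filter.Tendsto (fun k => f (φ k) x) Filter.atTop (nhds (g x))) ∧
      (∀ U : Set Y, IsOpen U → ∃ F : ℕ → Set X, (∀ n, IsClosed (F n)) ∧
        g ⁻¹' U = ⋃ n, F n) := by
  classical
  have hm : ∀ m : ℕ, ∃ C : ℕ → Set X, (∀ i, IsClosed (C i)) ∧ (⋃ i, C i) = Set.univ ∧
      ∀ n : ℕ, ∀ i, ∀ x ∈ C i, ∀ y ∈ C i, dist (f n x) (f n y) ≤ 1 / (m + 1) :=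
    fun m => h (1 / (m + 1)) (by positivity)
  choose C hCcl hCcov hCosc using hm
  set σ := {p : ℕ × ℕ // (C p.1 p.2).Nonempty} with hσ
  let D : σ → X := fun p => p.2.choose
  have hD : ∀ p : σ, D p ∈ C p.1.1 p.1.2 := fun p => p.2.choose_spec
  let K : σ → Set Y := fun p => closure {y : Y | ∃ n, y = f n (D p)}
  have hK : IsCompact (Set.univ.pi K) := isCompact_univ_pi fun p => hcpt (D p)
  have hmem : ∀ n : ℕ, (fun p : σ => f n (D p)) ∈ Set.univ.pi K := by
    intro n p _
    exact subset_closure ⟨n, rfl⟩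
  obtain ⟨L, _, φ, hφ, hconv⟩ :=
    hK.tendsto_subseq (x := fun n => fun p : σ => f n (D p)) hmem
  have hconv' : ∀ p : σ, Tendsto (fun k => f (φ k) (D p)) atTop (𝓝 (L p)) := by
    intro p
    exact tendsto_pi_nhds.1 hconv p
  have hidx : ∀ (x : X) (m : ℕ), ∃ i, x ∈ C m i := by
    intro x m
    have hx : x ∈ ⋃ i, C m i := (hCcov m).symm ▸ Set.mem_univ x
    simpa using hx
  have hlim : ∀ x : X, ∃ y : Y, Tendsto (fun k => f (φ k) x) atTop (𝓝 y) := by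
    intro x
    have hcs : CauchySeq fun k => f (φ k) x := by
      rw [Metric.cauchySeq_iff]
      intro ε hε
      obtain ⟨m, hm'⟩ : ∃ m : ℕ, 1 / ((m : ℝ) + 1) < ε / 3 :=
        exists_nat_one_div_lt (by linarith)
      obtain ⟨i, hi⟩ := hidx x m
      set p : σ := ⟨(m, i), ⟨x, hi⟩⟩ with hp
      have hc := (hconv' p).cauchySeq
      rw [Metric.cauchySeq_iff] at hc
      obtain ⟨N, hN⟩ := hc (ε / 3) (by linarith)
      refine ⟨N, fun a ha b hb => ?_⟩
      have h1 : dist (f (φ a) x) (f (φ a) (D p)) ≤ 1 / (m + 1) :=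
        hCosc m (φ a) i x hi (D p) (hD p)
      have h2 : dist (f (φ b) (D p)) (f (φ b) x) ≤ 1 / (m + 1) :=
        hCosc m (φ b) i (D p) (hD p) x hi
      have h3 := hN a ha b hb
      calc dist (f (φ a) x) (f (φ b) x)
          ≤ dist (f (φ a) x) (f (φ a) (D p)) + dist (f (φ a) (D p)) (f (φ b) (D p)) +
            dist (f (φ b) (D p)) (f (φ b) x) := dist_triangle4 _ _ _ _
        _ < ε := by linarith
    have hmem' : ∀ k, f (φ k) x ∈ closure {y : Y | ∃ n, y = f n x} := fun k =>
      subset_closure ⟨φ k, rfl⟩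
    obtain ⟨a, _, ha⟩ := cauchySeq_tendsto_of_isComplete (hcpt x).isComplete hmem' hcs
    exact ⟨a, ha⟩
  choose g hg using hlim
  refine ⟨φ, hφ, g, hg, ?_⟩
  have hgosc : ∀ m i, ∀ x ∈ C m i, ∀ y ∈ C m i, dist (g x) (g y) ≤ 1 / (m + 1) := by
    intro m i x hx y hy
    have ht : Tendsto (fun k => dist (f (φ k) x) (f (φ k) y)) atTop
        (𝓝 (dist (g x) (g y))) := (hg x).dist (hg y)
    exact le_of_tendsto ht (Filter.Eventually.of_forall fun k => hCosc m (φ k) i x hx y hy)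
  intro U hU
  let e := Denumerable.eqv (ℕ × ℕ)
  let F : ℕ × ℕ → Set X := fun q => if ∀ z ∈ C q.1 q.2, g z ∈ U then C q.1 q.2 else ∅
  refine ⟨fun n => F (e.symm n), fun n => ?_, ?_⟩
  · dsimp only [F]
    split
    · exact hCcl _ _
    · exact isClosed_empty
  · ext x
    simp only [Set.mem_iUnion, Set.mem_preimage]
    constructor
    · intro hx
      obtain ⟨ε, hε, hball⟩ := Metric.isOpen_iff.1 hU (g x) hx
      obtain ⟨m, hm'⟩ : ∃ m : ℕ, 1 / ((m : ℝ) + 1) < ε := exists_nat_one_div_lt hε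
      obtain ⟨i, hi⟩ := hidx x m
      refine ⟨e (m, i), ?_⟩
      have hsub : ∀ z ∈ C m i, g z ∈ U := by
        intro z hz
        apply hball
        rw [mem_ball]
        calc dist (g z) (g x) ≤ 1 / (m + 1) := hgosc m i z hz x hi
          _ < ε := hm'
      simp only [F, Equiv.symm_apply_apply, if_pos hsub]
      exact hi
    · rintro ⟨n, hn⟩
      dsimp only [F] at hn
      split at hn
      · exact ‹∀ z ∈ _, g z ∈ U› x hn
      · exact absurd hn (Set.notMem_empty x)
end

section
/- Let X be a Baire metric space and (f_n) a sequence of bounded real-valued Baire class 1 functions on X converging uniformly to f : X → ℝ. Then for every ε > 0 there is a finite cover B of X consisting of sets which are either open or F_σ and nowhere dense, such that diam f_n(B) ≤ ε for all B ∈ B and all n ∈ ℕ. -/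
lemma isFsigma_of_isOpen {X : Type*} [MetricSpace X] {U : Set X} (hU : IsOpen U) :
    IsFsigma U := by
  refine ⟨fun n => ⋂ y ∈ Uᶜ, {x | 1 / (n + 1 : ℝ) ≤ dist x y}, fun n => ?_, ?_⟩
  · exact isClosed_biInter fun y _ => isClosed_le continuous_const (continuous_id.dist continuous_const)
  · ext x
    simp only [Set.mem_iUnion, Set.mem_iInter, Set.mem_setOf_eq]
    constructor
    · intro hx
      obtain ⟨r, hr, hball⟩ := Metric.isOpen_iff.1 hU x hx
      obtain ⟨n, hn⟩ := exists_nat_one_div_lt hr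
      refine ⟨n, fun y hy => ?_⟩
      by_contra hlt
      push_neg at hlt
      exact hy (hball (by simpa [Metric.mem_ball, dist_comm] using lt_trans hlt hn))
    · rintro ⟨n, hn⟩
      by_contra hx
      have := hn x hx
      simp at this
      have : (0:ℝ) < 1 / (n+1) := by positivity
      linarith [hn x hx, dist_self x]

lemma IsFsigma.inter {X : Type*} [TopologicalSpace X] {s t : Set X}
    (hs : IsFsigma s) (ht : IsFsigma t) : IsFsigma (s ∩ t) := by
  obtain ⟨F, hF, rfl⟩ := hs
  obtain ⟨G, hG, rfl⟩ := ht
  refine ⟨fun n => F n.unpair.1 ∩ G n.unpair.2, fun n => (hF _).inter (hG _), ?_⟩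
  ext x
  simp only [Set.mem_inter_iff, Set.mem_iUnion]
  constructor
  · rintro ⟨⟨k, hk⟩, ⟨l, hl⟩⟩
    exact ⟨Nat.pair k l, by simpa [Nat.unpair_pair] using ⟨hk, hl⟩⟩
  · rintro ⟨n, hn, hn'⟩
    exact ⟨⟨_, hn⟩, ⟨_, hn'⟩⟩

lemma IsNowhereDense.subset' {X : Type*} [TopologicalSpace X] {s t : Set X}
    (h : IsNowhereDense t) (hst : s ⊆ t) : IsNowhereDense s := by
  have : interior (closure s) ⊆ interior (closure t) :=
    interior_mono (closure_mono hst)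
  rw [IsNowhereDense] at h ⊢
  exact Set.eq_empty_of_subset_empty (h ▸ this)

lemma isFsigma_of_isClosed {X : Type*} [TopologicalSpace X] {s : Set X} (hs : IsClosed s) :
    IsFsigma s := ⟨fun _ => s, fun _ => hs, (Set.iUnion_const s).symm⟩

lemma core_cover {X : Type*} [MetricSpace X] [BaireSpace X] (h : X → ℝ) (M : ℝ)
    (hM : ∀ x, |h x| ≤ M)
    (hB1 : ∀ U : Set ℝ, IsOpen U → ∃ F : ℕ → Set X, (∀ k, IsClosed (F k)) ∧
      h ⁻¹' U = ⋃ k, F k)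
    {δ : ℝ} (hδ : 0 < δ) :
    ∃ ℬ : Set (Set X), ℬ.Finite ∧ ⋃₀ ℬ = Set.univ ∧
      ∀ B ∈ ℬ, IsFsigma B ∧ (IsOpen B ∨ IsNowhereDense B) ∧
        ∀ x ∈ B, ∀ y ∈ B, dist (h x) (h y) ≤ δ := by
  set M' : ℝ := max M 0 with hM'def
  have hM'0 : 0 ≤ M' := le_max_right _ _
  have hM' : ∀ x, |h x| ≤ M' := fun x => (hM x).trans (le_max_left _ _)
  set c : ℕ → ℝ := fun j => -M' + j * (δ / 2) with hcdef
  set I : ℕ → Set ℝ := fun j => Set.Ioo (c j - δ / 2) (c j + δ / 2) with hIdef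
  set A : ℕ → Set X := fun j => h ⁻¹' I j with hAdef
  set K : ℕ := ⌊4 * M' / δ⌋₊ with hKdef
  -- osc on A j is small
  have hosc : ∀ j, ∀ x ∈ A j, ∀ y ∈ A j, dist (h x) (h y) ≤ δ := by
    intro j x hx y hy
    simp only [hAdef, Set.mem_preimage, hIdef, Set.mem_Ioo] at hx hy
    rw [Real.dist_eq, abs_le]
    constructor <;> linarith [hx.1, hx.2, hy.1, hy.2]
  -- covering
  have hcov : ∀ x : X, ∃ j ≤ K, x ∈ A j := by
    intro x
    have ht := abs_le.1 (hM' x)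
    have hδ2 : (0:ℝ) < δ / 2 := by linarith
    set t := h x with htdef
    have hnn : 0 ≤ (t + M') / (δ / 2) := by
      apply div_nonneg _ hδ2.le; linarith [ht.1]
    refine ⟨⌊(t + M') / (δ / 2)⌋₊, ?_, ?_⟩
    · rw [hKdef]
      apply Nat.floor_le_floor
      rw [div_le_div_iff₀ hδ2 hδ]
      nlinarith [ht.2]
    · have h1 : (⌊(t + M') / (δ / 2)⌋₊ : ℝ) ≤ (t + M') / (δ / 2) := Nat.floor_le hnn
      have h2 : (t + M') / (δ / 2) < ⌊(t + M') / (δ / 2)⌋₊ + 1 := Nat.lt_floor_add_one _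
      rw [le_div_iff₀ hδ2] at h1
      rw [div_lt_iff₀ hδ2] at h2
      simp only [hAdef, Set.mem_preimage, hIdef, Set.mem_Ioo, hcdef]
      constructor <;> [linarith; linarith]
  choose F hFcl hFeq using fun j : ℕ => hB1 (I j) isOpen_Ioo
  set U : ℕ → Set X := fun j => ⋃ k, interior (F j k) with hUdef
  have hUopen : ∀ j, IsOpen (U j) := fun j => isOpen_iUnion fun k => isOpen_interior
  have hUsub : ∀ j, U j ⊆ A j := by
    intro j x hx
    simp only [hUdef, Set.mem_iUnion] at hx
    obtain ⟨k, hk⟩ := hx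
    have : x ∈ h ⁻¹' I j := by
      rw [hFeq j]; exact Set.mem_iUnion.2 ⟨k, interior_subset hk⟩
    exact this
  set W : Set X := ⋃ j ∈ Set.Iic K, U j with hWdef
  set C : Set X := Wᶜ with hCdef
  have hWopen : IsOpen W := isOpen_biUnion fun j _ => hUopen j
  have hCclosed : IsClosed C := hWopen.isClosed_compl
  -- C is nowhere dense, via Baire
  have hWdense : Dense W := by
    have hDo : ∀ p : ℕ × ℕ, IsOpen (interior (F p.1 p.2) ∪ (F p.1 p.2)ᶜ) :=
      fun p => isOpen_interior.union (hFcl p.1 p.2).isOpen_compl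
    have hDd : ∀ p : ℕ × ℕ, Dense (interior (F p.1 p.2) ∪ (F p.1 p.2)ᶜ) := by
      intro p
      have h1 : interior (frontier (F p.1 p.2)) = ∅ := interior_frontier (hFcl p.1 p.2)
      have h2 := interior_eq_empty_iff_dense_compl.1 h1
      have h3 : (frontier (F p.1 p.2))ᶜ = interior (F p.1 p.2) ∪ (F p.1 p.2)ᶜ := by
        rw [(hFcl p.1 p.2).frontier_eq]
        ext z
        simp only [Set.mem_compl_iff, Set.mem_diff, Set.mem_union, not_and, not_not]
        tauto
      rwa [h3] at h2
    have hdense := dense_iInter_of_isOpen hDo hDd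
    apply hdense.mono
    intro x hx
    simp only [Set.mem_iInter] at hx
    obtain ⟨j, hjK, hxA⟩ := hcov x
    have hxA' : x ∈ ⋃ k, F j k := by rw [← hFeq j]; exact hxA
    obtain ⟨k, hk⟩ := Set.mem_iUnion.1 hxA'
    rcases hx (j, k) with hint | hcompl
    · exact Set.mem_biUnion hjK (Set.mem_iUnion.2 ⟨k, hint⟩)
    · exact absurd hk hcompl
  have hCnd : IsNowhereDense C := by
    rw [IsNowhereDense, hCclosed.closure_eq]
    rw [interior_eq_empty_iff_dense_compl, hCdef, compl_compl]
    exact hWdense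
  -- the cover
  refine ⟨U '' Set.Iic K ∪ (fun j => C ∩ A j) '' Set.Iic K,
    ((Set.finite_Iic K).image U).union ((Set.finite_Iic K).image _), ?_, ?_⟩
  · apply Set.eq_univ_of_forall
    intro x
    obtain ⟨j, hjK, hxA⟩ := hcov x
    by_cases hxW : x ∈ W
    · obtain ⟨j', hj', hx'⟩ := Set.mem_iUnion₂.1 hxW
      exact ⟨U j', Or.inl ⟨j', hj', rfl⟩, hx'⟩
    · exact ⟨C ∩ A j, Or.inr ⟨j, hjK, rfl⟩, hxW, hxA⟩
  · rintro B (⟨j, hj, rfl⟩ | ⟨j, hj, rfl⟩)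
    · exact ⟨isFsigma_of_isOpen (hUopen j), Or.inl (hUopen j),
        fun x hx y hy => hosc j x (hUsub j hx) y (hUsub j hy)⟩
    · refine ⟨(isFsigma_of_isClosed hCclosed).inter ⟨F j, hFcl j, hFeq j⟩,
        Or.inr (hCnd.subset' Set.inter_subset_left), fun x hx y hy =>
          hosc j x hx.2 y hy.2⟩

lemma multi_cover {X : Type*} [MetricSpace X] [BaireSpace X] (f : ℕ → X → ℝ)
    (hbd : ∀ n : ℕ, ∃ M : ℝ, ∀ x : X, |f n x| ≤ M)
    (hB1 : ∀ n : ℕ, ∀ U : Set ℝ, IsOpen U → ∃ F : ℕ → Set X, (∀ k, IsClosed (F k)) ∧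
      f n ⁻¹' U = ⋃ k, F k)
    {δ : ℝ} (hδ : 0 < δ) (m : ℕ) :
    ∃ ℬ : Set (Set X), ℬ.Finite ∧ ⋃₀ ℬ = Set.univ ∧
      ∀ B ∈ ℬ, IsFsigma B ∧ (IsOpen B ∨ IsNowhereDense B) ∧
        ∀ i ≤ m, ∀ x ∈ B, ∀ y ∈ B, dist (f i x) (f i y) ≤ δ := by
  induction m with
  | zero =>
    obtain ⟨M, hM⟩ := hbd 0
    obtain ⟨ℬ, h1, h2, h3⟩ := core_cover (f 0) M hM (hB1 0) hδ
    exact ⟨ℬ, h1, h2, fun B hB => ⟨(h3 B hB).1, (h3 B hB).2.1,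
      fun i hi x hx y hy => Nat.le_zero.1 hi ▸ (h3 B hB).2.2 x hx y hy⟩⟩
  | succ m ih =>
    obtain ⟨ℬ, hBfin, hBcov, hBprop⟩ := ih
    obtain ⟨M, hM⟩ := hbd (m + 1)
    obtain ⟨𝒞, hCfin, hCcov, hCprop⟩ := core_cover (f (m + 1)) M hM (hB1 (m + 1)) hδ
    refine ⟨Set.image2 (· ∩ ·) ℬ 𝒞, hBfin.image2 _ hCfin, ?_, ?_⟩
    · apply Set.eq_univ_of_forall
      intro x
      have hx1 : x ∈ ⋃₀ ℬ := hBcov ▸ Set.mem_univ x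
      have hx2 : x ∈ ⋃₀ 𝒞 := hCcov ▸ Set.mem_univ x
      obtain ⟨B, hB, hxB⟩ := hx1
      obtain ⟨Cs, hC, hxC⟩ := hx2
      exact ⟨B ∩ Cs, Set.mem_image2_of_mem hB hC, hxB, hxC⟩
    · rintro _ ⟨B, hB, Cs, hC, rfl⟩
      obtain ⟨hBf, hBoc, hBosc⟩ := hBprop B hB
      obtain ⟨hCf, hCoc, hCosc⟩ := hCprop Cs hC
      refine ⟨hBf.inter hCf, ?_, ?_⟩
      · rcases hBoc with hBo | hBn
        · rcases hCoc with hCo | hCn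
          · exact Or.inl (hBo.inter hCo)
          · exact Or.inr (hCn.subset' Set.inter_subset_right)
        · exact Or.inr (hBn.subset' Set.inter_subset_left)
      · intro i hi x hx y hy
        rcases Nat.lt_succ_iff_lt_or_eq.1 (Nat.lt_succ_of_le hi) with hi' | rfl
        · exact hBosc i (Nat.lt_succ_iff.1 hi') x hx.1 y hy.1
        · exact hCosc x hx.2 y hy.2

/-- Uniformly convergent sequences of bounded Baire 1 functions on a Baire metric space
admit, for each ε > 0, finite covers by open or Fσ nowhere dense sets with small images. -/
theorem stmt_13 {X : Type*} [MetricSpace X] [BaireSpace X] (f : ℕ → X → ℝ) (g : X → ℝ)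
    (hbd : ∀ n : ℕ, ∃ M : ℝ, ∀ x : X, |f n x| ≤ M)
    (hB1 : ∀ n : ℕ, ∀ U : Set ℝ, IsOpen U → ∃ F : ℕ → Set X, (∀ k, IsClosed (F k)) ∧
      f n ⁻¹' U = ⋃ k, F k)
    (hconv : TendstoUniformly f g Filter.atTop) :
    ∀ ε : ℝ, 0 < ε → ∃ ℬ : Set (Set X), ℬ.Finite ∧ ⋃₀ ℬ = Set.univ ∧
      ∀ B ∈ ℬ, (IsOpen B ∨ (IsFsigma B ∧ IsNowhereDense B)) ∧
        ∀ n : ℕ, ∀ x ∈ B, ∀ y ∈ B, dist (f n x) (f n y) ≤ ε := by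
  intro ε hε
  have h8 : (0:ℝ) < ε / 8 := by linarith
  obtain ⟨N, hN⟩ := (Filter.eventually_atTop.1
    ((Metric.tendstoUniformly_iff.1 hconv) (ε / 8) h8))
  obtain ⟨ℬ, hfin, hcov, hprop⟩ := multi_cover f hbd hB1 (show (0:ℝ) < ε / 2 by linarith) N
  refine ⟨ℬ, hfin, hcov, fun B hB => ?_⟩
  obtain ⟨hBf, hBoc, hBosc⟩ := hprop B hB
  refine ⟨?_, ?_⟩
  · rcases hBoc with hBo | hBn
    · exact Or.inl hBo
    · exact Or.inr ⟨hBf, hBn⟩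
  · intro n x hx y hy
    by_cases hn : n ≤ N
    · linarith [hBosc n hn x hx y hy]
    · push_neg at hn
      have hnN : N ≤ n := hn.le
      have d1 : dist (f n x) (f N x) ≤ ε / 4 := by
        calc dist (f n x) (f N x) ≤ dist (f n x) (g x) + dist (g x) (f N x) :=
              dist_triangle _ _ _
          _ ≤ ε / 8 + ε / 8 := by
              have := hN n hnN x
              have := hN N le_rfl x
              rw [dist_comm (f n x) (g x)]
              linarith
          _ = ε / 4 := by ring
      have d2 : dist (f N y) (f n y) ≤ ε / 4 := by
        calc dist (f N y) (f n y) ≤ dist (f N y) (g y) + dist (g y) (f n y) :=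
              dist_triangle _ _ _
          _ ≤ ε / 8 + ε / 8 := by
              have := hN n hnN y
              have := hN N le_rfl y
              rw [dist_comm (f N y) (g y)]
              linarith
          _ = ε / 4 := by ring
      have d3 : dist (f N x) (f N y) ≤ ε / 2 := hBosc N le_rfl x hx y hy
      calc dist (f n x) (f n y) ≤ dist (f n x) (f N x) + dist (f N x) (f N y)
            + dist (f N y) (f n y) := dist_triangle4 _ _ _ _
        _ ≤ ε / 4 + ε / 2 + ε / 4 := by linarith
        _ = ε := by ring
end

section
/- Let X be a topological space and (f_n) a pointwise bounded sequence of real-valued functions on X. Suppose for every ε > 0 there is a finite cover B of X (by arbitrary sets) such that diam f_n(B) ≤ ε for every B ∈ B and every n ∈ ℕ. Then (f_n) contains a subsequence which converges uniformly on X. -/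
/-- A pointwise bounded sequence admitting, for every ε > 0, a finite cover on whose
members all oscillations are ≤ ε, has a uniformly convergent subsequence. -/
theorem stmt_14 {X : Type*} [TopologicalSpace X] (f : ℕ → X → ℝ)
    (hbd : ∀ x : X, ∃ M : ℝ, ∀ n : ℕ, |f n x| ≤ M)
    (h : ∀ ε : ℝ, 0 < ε → ∃ ℬ : Set (Set X), ℬ.Finite ∧ ⋃₀ ℬ = Set.univ ∧
      ∀ B ∈ ℬ, ∀ n : ℕ, ∀ x ∈ B, ∀ y ∈ B, dist (f n x) (f n y) ≤ ε) :
    ∃ φ : ℕ → ℕ, StrictMono φ ∧ ∃ g : X → ℝ,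
      TendstoUniformly (fun k => f (φ k)) g Filter.atTop := by
  classical
  choose M hM using hbd
  have hcov : ∀ m : ℕ, ∃ ℬ : Set (Set X), ℬ.Finite ∧ ⋃₀ ℬ = Set.univ ∧
      ∀ B ∈ ℬ, ∀ n : ℕ, ∀ x ∈ B, ∀ y ∈ B, dist (f n x) (f n y) ≤ 1 / (m + 1) := by
    intro m
    exact h _ (by positivity)
  choose ℬ hfin hcovu hosc using hcov
  -- countable index of (level, nonempty member of the level-cover)
  let I := Σ m : ℕ, {B : Set X // B ∈ ℬ m ∧ B.Nonempty}
  haveI hFin : ∀ m : ℕ, Finite {B : Set X // B ∈ ℬ m ∧ B.Nonempty} := by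
    intro m
    exact ((hfin m).subset (fun B hB => hB.1)).to_subtype
  haveI : Countable I := by infer_instance
  -- representative points
  have hrep : ∀ i : I, ∃ x : X, x ∈ (i.2 : Set X) := fun i => i.2.2.2
  choose c hc using hrep
  -- the sequence of restrictions lives in a compact set of a first-countable space
  let K : Set (I → ℝ) := Set.pi Set.univ fun i => Set.Icc (-(M (c i))) (M (c i))
  have hK : IsCompact K := isCompact_univ_pi fun i => isCompact_Icc
  have hmem : ∀ n : ℕ, (fun i : I => f n (c i)) ∈ K := by
    intro n i _
    exact abs_le.1 (hM (c i) n)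
  obtain ⟨a, -, φ, hφ, ha⟩ := hK.isSeqCompact hmem
  have hptc : ∀ i : I, Filter.Tendsto (fun k => f (φ k) (c i)) Filter.atTop (nhds (a i)) := by
    intro i
    exact (tendsto_pi_nhds.1 ha i)
  -- uniform Cauchy
  have hUC : UniformCauchySeqOn (fun k => f (φ k)) Filter.atTop Set.univ := by
    rw [Metric.uniformCauchySeqOn_iff]
    intro ε hε
    obtain ⟨m, hm⟩ := exists_nat_one_div_lt (show (0:ℝ) < ε / 3 by linarith)
    -- a uniform Cauchy index over the (finitely many) reps at level m
    haveI : Fintype {B : Set X // B ∈ ℬ m ∧ B.Nonempty} := Fintype.ofFinite _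
    have hCau : ∀ B : {B : Set X // B ∈ ℬ m ∧ B.Nonempty}, ∃ N : ℕ, ∀ k ≥ N, ∀ l ≥ N,
        dist (f (φ k) (c ⟨m, B⟩)) (f (φ l) (c ⟨m, B⟩)) < ε / 3 := by
      intro B
      have := (hptc ⟨m, B⟩).cauchySeq
      rw [Metric.cauchySeq_iff] at this
      obtain ⟨N, hN⟩ := this (ε / 3) (by linarith)
      exact ⟨N, fun k hk l hl => hN k hk l hl⟩
    choose N hN using hCau
    refine ⟨Finset.univ.sup N, fun k hk l hl x _ => ?_⟩
    -- find the cover member containing x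
    have hx : x ∈ ⋃₀ ℬ m := by rw [hcovu m]; trivial
    obtain ⟨B, hB, hxB⟩ := hx
    set B' : {B : Set X // B ∈ ℬ m ∧ B.Nonempty} := ⟨B, hB, ⟨x, hxB⟩⟩
    have hcB : c ⟨m, B'⟩ ∈ B := hc ⟨m, B'⟩
    have h1 : dist (f (φ k) x) (f (φ k) (c ⟨m, B'⟩)) ≤ 1 / (m + 1) :=
      hosc m B hB _ x hxB _ hcB
    have h3 : dist (f (φ l) (c ⟨m, B'⟩)) (f (φ l) x) ≤ 1 / (m + 1) :=
      hosc m B hB _ _ hcB x hxB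
    have h2 : dist (f (φ k) (c ⟨m, B'⟩)) (f (φ l) (c ⟨m, B'⟩)) < ε / 3 :=
      hN B' k (le_trans (Finset.le_sup (Finset.mem_univ B')) hk)
        l (le_trans (Finset.le_sup (Finset.mem_univ B')) hl)
    calc dist (f (φ k) x) (f (φ l) x)
        ≤ dist (f (φ k) x) (f (φ k) (c ⟨m, B'⟩)) + dist (f (φ k) (c ⟨m, B'⟩)) (f (φ l) x) :=
          dist_triangle _ _ _
      _ ≤ dist (f (φ k) x) (f (φ k) (c ⟨m, B'⟩)) +
            (dist (f (φ k) (c ⟨m, B'⟩)) (f (φ l) (c ⟨m, B'⟩)) +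
              dist (f (φ l) (c ⟨m, B'⟩)) (f (φ l) x)) := by
          gcongr; exact dist_triangle _ _ _
      _ < ε := by linarith
  -- pointwise limits exist
  have hpt : ∀ x : X, ∃ y : ℝ, Filter.Tendsto (fun k => f (φ k) x) Filter.atTop (nhds y) := by
    intro x
    have : CauchySeq (fun k => f (φ k) x) := by
      rw [Metric.cauchySeq_iff]
      intro ε hε
      obtain ⟨Nn, hNn⟩ := (Metric.uniformCauchySeqOn_iff.1 hUC) ε hε
      exact ⟨Nn, fun k hk l hl => hNn k hk l hl x (Set.mem_univ x)⟩
    exact cauchySeq_tendsto_of_complete this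
  choose g hg using hpt
  refine ⟨φ, hφ, g, ?_⟩
  rw [← tendstoUniformlyOn_univ]
  exact hUC.tendstoUniformlyOn_of_tendsto fun x _ => hg x
end

section
/- Let (f_n) be a uniformly bounded sequence of real-valued Baire class 1 functions on a Baire metric space X. Then (f_n) contains a uniformly convergent subsequence if and only if there is a subsequence (f_{n_k}) such that for every ε > 0 there is a finite cover B of X consisting of sets that are either open or F_σ nowhere dense with diam f_{n_k}(B) ≤ ε for all B ∈ B and all k. -/
open Set Filter Topology

lemma isFsigma_iUnion_closed {X : Type*} [TopologicalSpace X] {ι : Type*} [Countable ι]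
    {F : ι → Set X} (hF : ∀ i, IsClosed (F i)) : IsFsigma (⋃ i, F i) := by
  cases isEmpty_or_nonempty ι with
  | inl h => exact ⟨fun _ => ∅, fun _ => isClosed_empty, by simp⟩
  | inr h =>
    obtain ⟨e, he⟩ := exists_surjective_nat ι
    exact ⟨fun n => F (e n), fun n => hF _, (he.iUnion_comp F).symm⟩

lemma isFsigma_iInter {X : Type*} [TopologicalSpace X] {p : ℕ} {s : Fin p → Set X}
    (hs : ∀ j, IsFsigma (s j)) : IsFsigma (⋂ j, s j) := by
  choose F hFc hFs using hs
  have key : (⋂ j, s j) = ⋃ c : Fin p → ℕ, ⋂ j, F j (c j) := by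
    ext x
    simp only [mem_iInter, mem_iUnion]
    constructor
    · intro h
      have h' : ∀ j, ∃ n, x ∈ F j n := fun j => by
        have := h j; rw [hFs j] at this; exact mem_iUnion.mp this
      obtain ⟨c, hc⟩ := Classical.axiomOfChoice h'
      exact ⟨c, hc⟩
    · rintro ⟨c, hc⟩ j
      rw [hFs j]; exact mem_iUnion.mpr ⟨c j, hc j⟩
  rw [key]
  exact isFsigma_iUnion_closed (fun c => isClosed_iInter fun j => hFc j (c j))

lemma isNowhereDense_of_subset {X : Type*} [TopologicalSpace X] {s t : Set X}
    (hst : s ⊆ t) (ht : IsNowhereDense t) : IsNowhereDense s :=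
  eq_empty_of_subset_empty (ht ▸ interior_mono (closure_mono hst))

set_option maxHeartbeats 1000000 in
/-- A uniformly bounded sequence of real Baire 1 functions on a Baire metric space has
a uniformly convergent subsequence iff some subsequence admits, for every ε > 0, a
finite cover by open or Fσ nowhere dense sets with oscillations ≤ ε. -/
theorem stmt_15 {X : Type*} [MetricSpace X] [BaireSpace X] (f : ℕ → X → ℝ)
    (hbd : ∃ M : ℝ, ∀ n : ℕ, ∀ x : X, |f n x| ≤ M)
    (hB1 : ∀ n : ℕ, ∀ U : Set ℝ, IsOpen U → ∃ F : ℕ → Set X, (∀ k, IsClosed (F k)) ∧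
      f n ⁻¹' U = ⋃ k, F k) :
    (∃ φ : ℕ → ℕ, StrictMono φ ∧ ∃ g : X → ℝ,
      TendstoUniformly (fun k => f (φ k)) g Filter.atTop) ↔
    (∃ φ : ℕ → ℕ, StrictMono φ ∧ ∀ ε : ℝ, 0 < ε →
      ∃ ℬ : Set (Set X), ℬ.Finite ∧ ⋃₀ ℬ = Set.univ ∧
        ∀ B ∈ ℬ, (IsOpen B ∨ (IsFsigma B ∧ IsNowhereDense B)) ∧
          ∀ k : ℕ, ∀ x ∈ B, ∀ y ∈ B, dist (f (φ k) x) (f (φ k) y) ≤ ε) := by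
  obtain ⟨M, hM⟩ := hbd
  cases isEmpty_or_nonempty X with
  | inl hX =>
    constructor
    · intro _
      refine ⟨id, strictMono_id, fun ε hε => ⟨∅, finite_empty, ?_, by simp⟩⟩
      rw [Set.sUnion_empty]
      exact (Set.eq_empty_of_isEmpty _).symm
    · intro _
      refine ⟨id, strictMono_id, fun _ => 0, ?_⟩
      intro u hu
      filter_upwards with k x
      exact isEmptyElim x
  | inr hX =>
  have hM0 : 0 ≤ M := le_trans (abs_nonneg _) (hM 0 (Classical.arbitrary X))
  constructor
  · -- forward direction
    rintro ⟨φ, hφ, g, hg⟩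
    refine ⟨φ, hφ, ?_⟩
    intro ε hε
    rw [Metric.tendstoUniformly_iff] at hg
    obtain ⟨N, hN⟩ := Filter.eventually_atTop.mp (hg (ε/8) (by positivity))
    set δ : ℝ := ε/4 with hδdef
    have hδ : 0 < δ := by positivity
    set m : ℕ := ⌊2*M/δ⌋₊ + 1 with hmdef
    set J : ℕ → Set ℝ := fun t => Ioo (-M + t*δ - δ) (-M + t*δ + δ) with hJdef
    set A : (Fin (N+1) → Fin m) → Set X :=
      fun σ => ⋂ j : Fin (N+1), f (φ (j:ℕ)) ⁻¹' J ((σ j : ℕ)) with hAdef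
    -- the sets A σ cover X
    have hcov : ∀ x : X, ∃ σ, x ∈ A σ := by
      intro x
      have hsel : ∀ j : Fin (N+1), ∃ t : Fin m, f (φ (j : ℕ)) x ∈ J t := by
        intro j
        set v := f (φ (j : ℕ)) x with hv
        have hvb := abs_le.mp (hM (φ (j : ℕ)) x)
        set t0 : ℕ := ⌊(v + M)/δ⌋₊ with ht0
        have hvM : 0 ≤ (v + M)/δ := by
          apply div_nonneg _ hδ.le; linarith [hvb.1]
        have h1 : (t0:ℝ) * δ ≤ v + M := by
          have := Nat.floor_le hvM
          calc (t0:ℝ) * δ ≤ ((v+M)/δ) * δ := by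
                exact mul_le_mul_of_nonneg_right this hδ.le
            _ = v + M := by field_simp
        have h2 : v + M < ((t0:ℝ) + 1) * δ := by
          have := Nat.lt_floor_add_one ((v + M)/δ)
          calc v + M = ((v+M)/δ) * δ := by field_simp
            _ < ((t0:ℝ) + 1) * δ := by
                exact mul_lt_mul_of_pos_right this hδ
        have htm : t0 < m := by
          have hle : (v + M)/δ ≤ 2*M/δ := by
            apply (div_le_div_iff_of_pos_right hδ).mpr
            linarith [hvb.2]
          have := Nat.floor_le_floor hle
          omega
        refine ⟨⟨t0, htm⟩, ?_⟩
        simp only [hJdef, mem_Ioo]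
        constructor <;> push_cast <;> nlinarith
      choose σ hσ using hsel
      exact ⟨σ, mem_iInter.mpr hσ⟩
    -- each A σ is Fσ
    have hAf : ∀ σ, IsFsigma (A σ) := by
      intro σ
      exact isFsigma_iInter fun j => hB1 (φ (j : ℕ)) (J (σ j)) isOpen_Ioo
    choose F hFc hFe using hAf
    set G : Set X := ⋃ p : (Fin (N+1) → Fin m) × ℕ, interior (F p.1 p.2) with hGdef
    have hGopen : IsOpen G := isOpen_iUnion fun p => isOpen_interior
    have hGdense : Dense G := by
      rw [hGdef]
      refine dense_iUnion_interior_of_closed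
        (f := fun p : (Fin (N+1) → Fin m) × ℕ => F p.1 p.2) (fun p => hFc p.1 p.2) ?_
      rw [eq_univ_iff_forall]
      intro x
      obtain ⟨σ, hσ⟩ := hcov x
      rw [hFe σ] at hσ
      obtain ⟨n, hn⟩ := mem_iUnion.mp hσ
      exact mem_iUnion.mpr ⟨⟨σ, n⟩, hn⟩
    have hRnd : IsNowhereDense Gᶜ := by
      rw [(isClosed_compl_iff.mpr hGopen).isNowhereDense_iff, interior_compl,
        hGdense.closure_eq, compl_univ]
    -- key oscillation estimate on A σ
    have hosc : ∀ σ, ∀ k : ℕ, ∀ x ∈ A σ, ∀ y ∈ A σ,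
        dist (f (φ k) x) (f (φ k) y) ≤ ε := by
      intro σ k x hx y hy
      have hJd : ∀ j : Fin (N+1), dist (f (φ (j:ℕ)) x) (f (φ (j:ℕ)) y) ≤ ε/2 := by
        intro j
        have hx' := mem_iInter.mp hx j
        have hy' := mem_iInter.mp hy j
        simp only [hJdef, mem_preimage, mem_Ioo] at hx' hy'
        rw [Real.dist_eq, abs_le]
        constructor <;> nlinarith
      rcases le_or_gt k N with hk | hk
      · have := hJd ⟨k, by omega⟩
        calc dist (f (φ k) x) (f (φ k) y) ≤ ε/2 := this
          _ ≤ ε := by linarith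
      · have hjN := hJd ⟨N, by omega⟩
        have h1 : dist (f (φ k) x) (f (φ N) x) ≤ ε/4 := by
          calc dist (f (φ k) x) (f (φ N) x)
              ≤ dist (f (φ k) x) (g x) + dist (g x) (f (φ N) x) := dist_triangle _ _ _
            _ ≤ ε/8 + ε/8 := by
                have ha := hN k (by omega) x
                have hb := hN N le_rfl x
                rw [dist_comm] at ha
                linarith
            _ = ε/4 := by ring
        have h2 : dist (f (φ N) y) (f (φ k) y) ≤ ε/4 := by
          calc dist (f (φ N) y) (f (φ k) y)
              ≤ dist (f (φ N) y) (g y) + dist (g y) (f (φ k) y) := dist_triangle _ _ _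
            _ ≤ ε/8 + ε/8 := by
                have ha := hN k (by omega) y
                have hb := hN N le_rfl y
                rw [dist_comm] at hb
                linarith
            _ = ε/4 := by ring
        calc dist (f (φ k) x) (f (φ k) y)
            ≤ dist (f (φ k) x) (f (φ N) x) + dist (f (φ N) x) (f (φ N) y)
              + dist (f (φ N) y) (f (φ k) y) := dist_triangle4 _ _ _ _
          _ ≤ ε/4 + ε/2 + ε/4 := by
              have := hjN
              simp only [Fin.val_mk] at this h1 h2 ⊢
              linarith
          _ = ε := by ring
    set O : (Fin (N+1) → Fin m) → Set X := fun σ => ⋃ n, interior (F σ n) with hOdef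
    have hOsub : ∀ σ, O σ ⊆ A σ := by
      intro σ
      rw [hFe σ]
      exact iUnion_mono fun n => interior_subset
    refine ⟨(Set.range O) ∪ (Set.range fun σ => Gᶜ ∩ A σ),
      (Set.finite_range O).union (Set.finite_range _), ?_, ?_⟩
    · rw [eq_univ_iff_forall]
      intro x
      by_cases hxG : x ∈ G
      · obtain ⟨p, hp⟩ := mem_iUnion.mp hxG
        exact ⟨O p.1, Or.inl ⟨p.1, rfl⟩, mem_iUnion.mpr ⟨p.2, hp⟩⟩
      · obtain ⟨σ, hσ⟩ := hcov x
        exact ⟨Gᶜ ∩ A σ, Or.inr ⟨σ, rfl⟩, hxG, hσ⟩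
    · rintro B (⟨σ, rfl⟩ | ⟨σ, rfl⟩)
      · exact ⟨Or.inl (isOpen_iUnion fun n => isOpen_interior),
          fun k x hx y hy => hosc σ k x (hOsub σ hx) y (hOsub σ hy)⟩
      · refine ⟨Or.inr ⟨?_, isNowhereDense_of_subset inter_subset_left hRnd⟩,
          fun k x hx y hy => hosc σ k x hx.2 y hy.2⟩
        refine ⟨fun n => Gᶜ ∩ F σ n, fun n => (isClosed_compl_iff.mpr hGopen).inter (hFc σ n), ?_⟩
        show Gᶜ ∩ A σ = ⋃ n, Gᶜ ∩ F σ n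
        rw [hFe σ, Set.inter_iUnion]
  · -- backward direction
    rintro ⟨φ, hφ, H⟩
    have H' : ∀ m : ℕ, ∃ ℬ : Set (Set X), ℬ.Finite ∧ ⋃₀ ℬ = Set.univ ∧
        ∀ B ∈ ℬ, (IsOpen B ∨ (IsFsigma B ∧ IsNowhereDense B)) ∧
          ∀ k : ℕ, ∀ x ∈ B, ∀ y ∈ B, dist (f (φ k) x) (f (φ k) y) ≤ 1/(m+1) :=
      fun m => H (1/(m+1)) (by positivity)
    choose ℬ hfin hcovB hprop using H'
    set T : Set (Set X) := {B | (∃ m, B ∈ ℬ m) ∧ B.Nonempty} with hTdef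
    have hTc : T.Countable := by
      have h1 : T ⊆ ⋃ m, ℬ m := by
        rintro B ⟨⟨m, hm⟩, -⟩
        exact mem_iUnion.mpr ⟨m, hm⟩
      exact (Set.countable_iUnion fun m => (hfin m).countable).mono h1
    haveI := hTc.to_subtype
    have hrep' : ∀ B : ↥T, ∃ x, x ∈ (B : Set X) := fun B => B.2.2
    choose rep hrep using hrep'
    set u : ℕ → (↥T → ↥(Set.Icc (-M) M)) :=
      fun k B => ⟨f (φ k) (rep B), Set.mem_Icc.mpr ⟨(abs_le.mp (hM _ _)).1, (abs_le.mp (hM _ _)).2⟩⟩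
      with hudef
    obtain ⟨l, ψ, hψ, hl⟩ := CompactSpace.tendsto_subseq u
    have hpt : ∀ B : ↥T, Tendsto (fun k => f (φ (ψ k)) (rep B)) atTop (𝓝 (l B : ℝ)) := by
      intro B
      have h1 : Tendsto (fun k => (u ∘ ψ) k B) atTop (𝓝 (l B)) := tendsto_pi_nhds.mp hl B
      exact (continuous_subtype_val.tendsto _).comp h1
    -- uniform Cauchy estimate
    have key : ∀ ε : ℝ, 0 < ε → ∃ Nk : ℕ, ∀ i ≥ Nk, ∀ j ≥ Nk, ∀ x : X,
        dist (f (φ (ψ i)) x) (f (φ (ψ j)) x) ≤ ε := by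
      intro ε hε
      obtain ⟨m, hm⟩ := exists_nat_gt (3/ε)
      have h1 : (1:ℝ)/(m+1) ≤ ε/3 := by
        rw [div_le_div_iff₀ (by positivity) (by norm_num)]
        have := (div_lt_iff₀ hε).mp hm
        nlinarith
      have hC : ∀ B : ↥T, ∃ K, ∀ i ≥ K, ∀ j ≥ K,
          dist (f (φ (ψ i)) (rep B)) (f (φ (ψ j)) (rep B)) < ε/3 :=
        fun B => Metric.cauchySeq_iff.mp (hpt B).cauchySeq (ε/3) (by positivity)
      choose K hK using hC
      set S : Set ↥T := Subtype.val ⁻¹' (ℬ m) with hSdef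
      have hSfin : S.Finite := (hfin m).preimage (Set.injOn_of_injective Subtype.val_injective)
      obtain ⟨N0, hN0⟩ := (hSfin.image K).bddAbove
      refine ⟨N0, fun i hi j hj x => ?_⟩
      have hx : x ∈ ⋃₀ ℬ m := by rw [hcovB m]; trivial
      obtain ⟨B, hBm, hxB⟩ := hx
      have hBT : B ∈ T := ⟨⟨m, hBm⟩, ⟨x, hxB⟩⟩
      set Bt : ↥T := ⟨B, hBT⟩ with hBt
      have hKB : K Bt ≤ N0 := hN0 (Set.mem_image_of_mem K hBm)
      have hrB : rep Bt ∈ B := hrep Bt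
      have hosc := (hprop m B hBm).2
      have e1 : dist (f (φ (ψ i)) x) (f (φ (ψ i)) (rep Bt)) ≤ ε/3 :=
        le_trans (hosc (ψ i) x hxB (rep Bt) hrB) h1
      have e2 : dist (f (φ (ψ i)) (rep Bt)) (f (φ (ψ j)) (rep Bt)) < ε/3 :=
        hK Bt i (le_trans hKB hi) j (le_trans hKB hj)
      have e3 : dist (f (φ (ψ j)) (rep Bt)) (f (φ (ψ j)) x) ≤ ε/3 :=
        le_trans (hosc (ψ j) (rep Bt) hrB x hxB) h1
      calc dist (f (φ (ψ i)) x) (f (φ (ψ j)) x)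
          ≤ dist (f (φ (ψ i)) x) (f (φ (ψ i)) (rep Bt))
            + dist (f (φ (ψ i)) (rep Bt)) (f (φ (ψ j)) (rep Bt))
            + dist (f (φ (ψ j)) (rep Bt)) (f (φ (ψ j)) x) := dist_triangle4 _ _ _ _
        _ ≤ ε := by linarith
    -- pointwise limits exist
    have hCx : ∀ x : X, ∃ y : ℝ, Tendsto (fun k => f (φ (ψ k)) x) atTop (𝓝 y) := by
      intro x
      apply cauchySeq_tendsto_of_complete
      rw [Metric.cauchySeq_iff]
      intro ε hε
      obtain ⟨Nk, h⟩ := key (ε/2) (half_pos hε)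
      exact ⟨Nk, fun i hi j hj => lt_of_le_of_lt (h i hi j hj x) (half_lt_self hε)⟩
    choose g hg using hCx
    refine ⟨φ ∘ ψ, hφ.comp hψ, g, ?_⟩
    rw [Metric.tendstoUniformly_iff]
    intro ε hε
    obtain ⟨Nk, h⟩ := key (ε/2) (half_pos hε)
    filter_upwards [eventually_ge_atTop Nk] with k hk x
    have hle : dist (g x) (f (φ (ψ k)) x) ≤ ε/2 := by
      have htd : Tendsto (fun j => dist (f (φ (ψ j)) x) (f (φ (ψ k)) x)) atTop
          (𝓝 (dist (g x) (f (φ (ψ k)) x))) := (hg x).dist tendsto_const_nhds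
      exact le_of_tendsto htd ((eventually_ge_atTop Nk).mono fun j hj => h j hj k hk x)
    calc dist (g x) (f ((φ ∘ ψ) k) x) ≤ ε/2 := hle
      _ < ε := half_lt_self hε
end

section
/- Let X be a metric space, Y a separable metric space, and (f_n) a sequence of Baire class 1 functions from X to Y converging to f uniformly on every bounded subset of X. Then the family {f_n : n ∈ ℕ} is equi-Lebesgue. -/
/-- A single Baire-1 function into a separable metric space admits, for every `ε > 0`,
a countable closed cover with oscillation at most `ε` on each piece. -/
lemma baire1_cover {X Y : Type*} [MetricSpace X] [MetricSpace Y]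
    [TopologicalSpace.SeparableSpace Y] [Nonempty Y] (h : X → Y)
    (hh : ∀ U : Set Y, IsOpen U → ∃ F : ℕ → Set X, (∀ k, IsClosed (F k)) ∧
      h ⁻¹' U = ⋃ k, F k) (ε : ℝ) (hε : 0 < ε) :
    ∃ D : ℕ → Set X, (∀ k, IsClosed (D k)) ∧ (⋃ k, D k) = Set.univ ∧
      ∀ k, ∀ x ∈ D k, ∀ y ∈ D k, dist (h x) (h y) ≤ ε := by
  obtain ⟨u, hu⟩ := TopologicalSpace.exists_dense_seq Y
  choose F hFc hFU using fun j => hh (Metric.ball (u j) (ε / 2)) Metric.isOpen_ball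
  refine ⟨fun k => F (Nat.unpair k).1 (Nat.unpair k).2, fun k => hFc _ _, ?_, ?_⟩
  · ext x
    simp only [Set.mem_iUnion, Set.mem_univ, iff_true]
    obtain ⟨j, hj⟩ := hu.exists_mem_open Metric.isOpen_ball
      (⟨h x, by simp [half_pos hε]⟩ : (Metric.ball (h x) (ε / 2)).Nonempty)
    have hx : x ∈ h ⁻¹' Metric.ball (u j) (ε / 2) := by
      simp only [Set.mem_preimage, Metric.mem_ball] at hj ⊢
      rwa [dist_comm]
    rw [hFU j] at hx
    obtain ⟨k, hk⟩ := Set.mem_iUnion.mp hx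
    exact ⟨Nat.pair j k, by simpa [Nat.unpair_pair] using hk⟩
  · intro k x hx y hy
    have hxm : x ∈ h ⁻¹' Metric.ball (u (Nat.unpair k).1) (ε / 2) := by
      rw [hFU]; exact Set.mem_iUnion.mpr ⟨_, hx⟩
    have hym : y ∈ h ⁻¹' Metric.ball (u (Nat.unpair k).1) (ε / 2) := by
      rw [hFU]; exact Set.mem_iUnion.mpr ⟨_, hy⟩
    simp only [Set.mem_preimage, Metric.mem_ball] at hxm hym
    calc dist (h x) (h y) ≤ dist (h x) (u (Nat.unpair k).1) + dist (u (Nat.unpair k).1) (h y) :=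
          dist_triangle _ _ _
      _ ≤ ε / 2 + ε / 2 := by rw [dist_comm (u _)]; exact add_le_add hxm.le hym.le
      _ = ε := by ring

/-- Baire 1 functions converging uniformly on bounded sets form an equi-Lebesgue family. -/
theorem stmt_16 {X Y : Type*} [MetricSpace X] [MetricSpace Y]
    [TopologicalSpace.SeparableSpace Y] (f : ℕ → X → Y) (g : X → Y)
    (hB1 : ∀ n : ℕ, ∀ U : Set Y, IsOpen U → ∃ F : ℕ → Set X, (∀ k, IsClosed (F k)) ∧
      f n ⁻¹' U = ⋃ k, F k)
    (hconv : ∀ B : Set X, Bornology.IsBounded B → TendstoUniformlyOn f g Filter.atTop B) :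
    ∀ ε : ℝ, 0 < ε → ∃ C : ℕ → Set X, (∀ i, IsClosed (C i)) ∧ (⋃ i, C i) = Set.univ ∧
      ∀ n : ℕ, ∀ i, ∀ x ∈ C i, ∀ y ∈ C i, dist (f n x) (f n y) ≤ ε := by
  intro ε hε
  rcases isEmpty_or_nonempty X with hX | hX
  · refine ⟨fun _ => ∅, fun _ => isClosed_empty, ?_, by simp⟩
    ext x; exact (IsEmpty.false x).elim
  obtain ⟨x0⟩ := hX
  haveI : Nonempty Y := ⟨g x0⟩
  -- countable closed covers for each individual fₙ with oscillation ≤ ε/2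
  choose D hDc hDu hDo using fun n => baire1_cover (f n) (hB1 n) (ε / 2) (by linarith)
  -- uniform convergence thresholds on closed balls
  have hN : ∀ m : ℕ, ∃ N : ℕ, ∀ n ≥ N, ∀ x ∈ Metric.closedBall x0 (m : ℝ),
      dist (g x) (f n x) < ε / 8 := by
    intro m
    have := (Metric.tendstoUniformlyOn_iff.mp
      (hconv (Metric.closedBall x0 (m : ℝ)) Metric.isBounded_closedBall)) (ε / 8) (by linarith)
    exact Filter.eventually_atTop.mp this
  choose N hNs using hN
  -- index type
  let ι : Type := (m : ℕ) × (Fin (N m + 1) → ℕ)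
  haveI : Countable ι := by infer_instance
  haveI : Nonempty ι := ⟨⟨0, fun _ => 0⟩⟩
  obtain ⟨e, he⟩ := exists_surjective_nat ι
  let E : ι → Set X := fun p =>
    Metric.closedBall x0 (p.1 : ℝ) ∩ ⋂ j : Fin (N p.1 + 1), D (j : ℕ) (p.2 j)
  refine ⟨fun i => E (e i), ?_, ?_, ?_⟩
  · intro i
    exact (Metric.isClosed_closedBall).inter (isClosed_iInter fun j => hDc _ _)
  · ext x
    simp only [Set.mem_iUnion, Set.mem_univ, iff_true]
    obtain ⟨m, hm⟩ := exists_nat_ge (dist x x0)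
    have ht : ∀ n : ℕ, ∃ k, x ∈ D n k := by
      intro n
      have : x ∈ ⋃ k, D n k := (hDu n).symm ▸ Set.mem_univ x
      exact Set.mem_iUnion.mp this
    choose t htt using ht
    obtain ⟨i, hi⟩ := he ⟨m, fun j => t (j : ℕ)⟩
    refine ⟨i, ?_⟩
    rw [hi]
    exact ⟨Metric.mem_closedBall.mpr hm, Set.mem_iInter.mpr fun j => htt _⟩
  · intro n i x hx y hy
    set p := e i with hp
    obtain ⟨hx1, hx2⟩ := hx
    obtain ⟨hy1, hy2⟩ := hy
    have hDmem : ∀ j : Fin (N p.1 + 1), x ∈ D (j : ℕ) (p.2 j) ∧ y ∈ D (j : ℕ) (p.2 j) :=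
      fun j => ⟨Set.mem_iInter.mp hx2 j, Set.mem_iInter.mp hy2 j⟩
    rcases le_or_gt n (N p.1) with hn | hn
    · -- n ≤ N p.1 : use the cover for fₙ directly
      have hj : n < N p.1 + 1 := Nat.lt_succ_of_le hn
      have := hDo n (p.2 ⟨n, hj⟩) x (hDmem ⟨n, hj⟩).1 y (hDmem ⟨n, hj⟩).2
      linarith
    · -- n > N p.1 : compare with f_{N p.1}
      set M := N p.1 with hM
      have hMj : M < M + 1 := Nat.lt_succ_self M
      have hMosc := hDo M (p.2 ⟨M, hMj⟩) x (hDmem ⟨M, hMj⟩).1 y (hDmem ⟨M, hMj⟩).2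
      have h1 := hNs p.1 n hn.le x hx1
      have h2 := hNs p.1 M le_rfl x hx1
      have h3 := hNs p.1 M le_rfl y hy1
      have h4 := hNs p.1 n hn.le y hy1
      have t1 : dist (f n x) (f n y) ≤
          dist (f n x) (g x) + dist (g x) (f M x) + dist (f M x) (f M y) +
          dist (f M y) (g y) + dist (g y) (f n y) := by
        calc dist (f n x) (f n y) ≤ dist (f n x) (f M x) + dist (f M x) (f M y)
              + dist (f M y) (f n y) := dist_triangle4 _ _ _ _
          _ ≤ (dist (f n x) (g x) + dist (g x) (f M x)) + dist (f M x) (f M y)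
              + (dist (f M y) (g y) + dist (g y) (f n y)) := by
            gcongr <;> exact dist_triangle _ _ _
          _ = _ := by ring
      rw [dist_comm (g x) (f n x)] at h1
      rw [dist_comm (g y) (f M y)] at h3
      linarith
end

section
/- Let X be a Baire metric space and Y a metric space. If F is an equi-cliquish family of functions from X to Y, then the set EC(F) of equi-continuity points of F is a dense G_δ subset of X. -/
/-- The set of equi-continuity points of an equi-cliquish family on a Baire metric
space is a dense Gδ set. -/
theorem stmt_17 {X Y : Type*} [MetricSpace X] [BaireSpace X] [MetricSpace Y]
    (F : Set (X → Y))
    (hcl : ∀ x : X, ∀ ε : ℝ, 0 < ε → ∀ U ∈ nhds x, ∃ G : Set X, IsOpen G ∧ G.Nonempty ∧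
      G ⊆ U ∧ ∀ f ∈ F, ∀ y ∈ G, ∀ z ∈ G, dist (f y) (f z) ≤ ε) :
    Dense {x : X | ∀ ε : ℝ, 0 < ε → ∃ U ∈ nhds x, ∀ f ∈ F, ∀ y ∈ U, ∀ z ∈ U,
        dist (f y) (f z) ≤ ε} ∧
    IsGδ {x : X | ∀ ε : ℝ, 0 < ε → ∃ U ∈ nhds x, ∀ f ∈ F, ∀ y ∈ U, ∀ z ∈ U,
        dist (f y) (f z) ≤ ε} := by
  set O : ℕ → Set X := fun n => {x | ∃ U : Set X, IsOpen U ∧ x ∈ U ∧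
      ∀ f ∈ F, ∀ y ∈ U, ∀ z ∈ U, dist (f y) (f z) ≤ 1 / (n + 1)} with hO
  have hOopen : ∀ n, IsOpen (O n) := by
    intro n
    rw [isOpen_iff_mem_nhds]
    rintro x ⟨U, hU, hxU, hb⟩
    exact Filter.mem_of_superset (hU.mem_nhds hxU) fun y hy => ⟨U, hU, hy, hb⟩
  have hpos : ∀ n : ℕ, (0 : ℝ) < 1 / (n + 1) := by
    intro n; positivity
  have hOdense : ∀ n, Dense (O n) := by
    intro n
    rw [dense_iff_inter_open]
    rintro V hV ⟨x, hxV⟩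
    obtain ⟨G, hGopen, ⟨g, hg⟩, hGV, hGb⟩ := hcl x (1 / (n + 1)) (hpos n) V (hV.mem_nhds hxV)
    exact ⟨g, hGV hg, G, hGopen, hg, hGb⟩
  have hEq : {x : X | ∀ ε : ℝ, 0 < ε → ∃ U ∈ nhds x, ∀ f ∈ F, ∀ y ∈ U, ∀ z ∈ U,
      dist (f y) (f z) ≤ ε} = ⋂ n, O n := by
    ext x
    constructor
    · intro hx
      refine Set.mem_iInter.2 fun n => ?_
      obtain ⟨U, hU, hb⟩ := hx (1 / (n + 1)) (hpos n)
      refine ⟨interior U, isOpen_interior, mem_interior_iff_mem_nhds.2 hU, ?_⟩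
      intro f hf y hy z hz
      exact hb f hf y (interior_subset hy) z (interior_subset hz)
    · intro hx ε hε
      obtain ⟨n, hn⟩ := exists_nat_one_div_lt hε
      obtain ⟨U, hUopen, hxU, hb⟩ := Set.mem_iInter.1 hx n
      exact ⟨U, hUopen.mem_nhds hxU, fun f hf y hy z hz =>
        (hb f hf y hy z hz).trans hn.le⟩
  rw [hEq]
  exact ⟨dense_iInter_of_isOpen hOopen hOdense,
    IsGδ.iInter fun n => (hOopen n).isGδ⟩
end

section
/- Let X be a Baire metric space and Y a metric space. If F is an equi-Lebesgue family of functions from X to Y, then F is equi-cliquish. -/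
/-- On a Baire metric space, every equi-Lebesgue family is equi-cliquish. -/
theorem stmt_18 {X Y : Type*} [MetricSpace X] [BaireSpace X] [MetricSpace Y]
    (F : Set (X → Y))
    (h : ∀ ε : ℝ, 0 < ε → ∃ C : ℕ → Set X, (∀ i, IsClosed (C i)) ∧ (⋃ i, C i) = Set.univ ∧
      ∀ f ∈ F, ∀ i, ∀ x ∈ C i, ∀ y ∈ C i, dist (f x) (f y) ≤ ε) :
    ∀ x : X, ∀ ε : ℝ, 0 < ε → ∀ U ∈ nhds x, ∃ G : Set X, IsOpen G ∧ G.Nonempty ∧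
      G ⊆ U ∧ ∀ f ∈ F, ∀ y ∈ G, ∀ z ∈ G, dist (f y) (f z) ≤ ε := by
  intro x ε hε U hU
  obtain ⟨C, hcl, hcov, hdiam⟩ := h ε hε
  obtain ⟨V, hVU, hVopen, hxV⟩ := mem_nhds_iff.mp hU
  have hd : Dense (⋃ i, interior (C i)) :=
    dense_iUnion_interior_of_closed hcl hcov
  obtain ⟨y, hyV, hy⟩ := hd.exists_mem_open hVopen ⟨x, hxV⟩
  obtain ⟨i, hyi⟩ := Set.mem_iUnion.mp hyV
  refine ⟨interior (C i) ∩ V, isOpen_interior.inter hVopen, ⟨y, hyi, hy⟩,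
    (Set.inter_subset_right).trans hVU, ?_⟩
  intro f hf a ha b hb
  exact hdiam f hf i a (interior_subset ha.1) b (interior_subset hb.1)
end

section
/- Let X be a separable metric space, Y a separable complete metric space, H ⊆ X a nonempty G_δ set, and F an equi-continuous family of functions from H to Y. Then every f ∈ F extends to a function f* : X → Y such that the family {f* : f ∈ F} is equi-Baire 1. -/
open Filter Metric Set Topology TopologicalSpace
open scoped Classical

set_option linter.unusedSectionVars false
noncomputable section
namespace Ext19

variable {X Y : Type*} [MetricSpace X] [MetricSpace Y]
variable (H : Set X) (F : Set (↥H → Y))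

/-- uniform small-oscillation predicate: all `f ∈ F` move by at most `e` on `ball x r ∩ H`. -/
def psi (x : X) (r e : ℝ) : Prop :=
  ∀ f ∈ F, ∀ w z : ↥H, dist x ↑w < r → dist x ↑z < r → dist (f w) (f z) ≤ e

variable {H F}

lemma psi_mono_r {x : X} {r r' e : ℝ} (h : psi H F x r e) (hr : r' ≤ r) :
    psi H F x r' e := fun f hf w z hw hz => h f hf w z (hw.trans_le hr) (hz.trans_le hr)

lemma psi_mono_e {x : X} {r e e' : ℝ} (h : psi H F x r e) (he : e ≤ e') :
    psi H F x r e' := fun f hf w z hw hz => (h f hf w z hw hz).trans he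

variable (H F) in
/-- points where the family has oscillation at most `e` -/
def Qs (e : ℝ) : Set X := {x | ∃ r > 0, psi H F x r e}

lemma Qs_mono {e e' : ℝ} (h : e ≤ e') : Qs H F e ⊆ Qs H F e' :=
  fun _ ⟨r, hr, hp⟩ => ⟨r, hr, psi_mono_e hp h⟩

lemma Qs_ball {x : X} {e : ℝ} (hx : x ∈ Qs H F e) :
    ∃ ρ > 0, ball x ρ ⊆ Qs H F e := by
  obtain ⟨r, hr, hp⟩ := hx
  refine ⟨r / 2, by linarith, fun y hy => ⟨r / 2, by linarith, fun f hf w z hw hz => ?_⟩⟩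
  rw [mem_ball, dist_comm] at hy
  have h1 := dist_triangle x y (w : X)
  have h2 := dist_triangle x y (z : X)
  exact hp f hf w z (by linarith) (by linarith)

variable (H F) in
/-- points of the closure where the family has zero oscillation -/
def Gs : Set X := closure H ∩ ⋂ n : ℕ, Qs H F (1 / (n + 1))

lemma Gs_subset_closure : Gs H F ⊆ closure H := fun _ h => h.1

variable (H F) in
/-- strata of positive oscillation -/
def Ts (n : ℕ) : Set X :=
  {x | x ∈ closure H ∧ x ∉ Qs H F (1 / (n + 1)) ∧ ∀ k < n, x ∈ Qs H F (1 / (k + 1))}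

variable (H F) in
def idx (x : X) : ℕ :=
  if h : ∃ n : ℕ, x ∉ Qs H F (1 / (n + 1)) then Nat.find h else 0

lemma exists_not_Qs {x : X} (hxc : x ∈ closure H) (hxG : x ∉ Gs H F) :
    ∃ n : ℕ, x ∉ Qs H F (1 / (n + 1)) := by
  by_contra h
  push_neg at h
  exact hxG ⟨hxc, mem_iInter.2 h⟩

lemma mem_Ts_idx {x : X} (hxc : x ∈ closure H) (hxG : x ∉ Gs H F) :
    x ∈ Ts H F (idx H F x) := by
  have h := exists_not_Qs hxc hxG
  rw [idx, dif_pos h]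
  exact ⟨hxc, Nat.find_spec h, fun k hk => by
    by_contra hc
    exact absurd (Nat.find_min h hk) (by simpa using hc)⟩

/-- if `x ∈ Qs (1/(m+1))` then `idx x ≥ m+1` -/
lemma idx_gt {x : X} (hxc : x ∈ closure H) (hxG : x ∉ Gs H F) {m : ℕ}
    (hm : x ∈ Qs H F (1 / (m + 1))) : m < idx H F x := by
  have h := exists_not_Qs hxc hxG
  rw [idx, dif_pos h]
  rw [Nat.lt_find_iff]
  intro k hk hc
  refine hc (Qs_mono ?_ hm)
  have hk1 : (k : ℝ) + 1 ≤ (m : ℝ) + 1 := by exact_mod_cast by omega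
  have : (0:ℝ) < (k:ℝ) + 1 := by positivity
  exact one_div_le_one_div_of_le this hk1


lemma cast_sub_one_add_one {n : ℕ} (hn : 1 ≤ n) : ((n - 1 : ℕ) : ℝ) + 1 = (n : ℝ) := by
  have h : (n - 1) + 1 = n := by omega
  exact_mod_cast congrArg (Nat.cast : ℕ → ℝ) h

lemma Ts_mem_Qs {n : ℕ} (hn : 1 ≤ n) {x : X} (hx : x ∈ Ts H F n) :
    x ∈ Qs H F (1 / n) := by
  have h := hx.2.2 (n - 1) (by omega)
  rwa [cast_sub_one_add_one hn] at h

lemma idx_ge {x : X} (hxc : x ∈ closure H) (hxG : x ∉ Gs H F) {m : ℕ} (hm : 1 ≤ m)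
    (hq : x ∈ Qs H F (1 / m)) : m ≤ idx H F x := by
  have h : x ∈ Qs H F (1 / ((m - 1 : ℕ) + 1)) := by rwa [cast_sub_one_add_one hm]
  have := idx_gt hxc hxG h
  omega

variable (H F) in
/-- valid radii at a stratum point -/
def Rset (n : ℕ) (x : X) : Set ℝ :=
  {r | 0 < r ∧ r ≤ 1 ∧ (n = 0 ∨ psi H F x (8 * r) (1 / n))}

variable (H F) in
def tfun (n : ℕ) (x : X) : ℝ := sSup (Rset H F n x) / 2

lemma Rset_bddAbove (n : ℕ) (x : X) : BddAbove (Rset H F n x) :=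
  ⟨1, fun _ hr => hr.2.1⟩

lemma Rset_nonempty {n : ℕ} {x : X} (hx : x ∈ Ts H F n) :
    (Rset H F n x).Nonempty := by
  rcases Nat.eq_zero_or_pos n with h0 | h1
  · exact ⟨1, one_pos, le_refl 1, Or.inl h0⟩
  · have hq : x ∈ Qs H F (1 / n) := by
      have := hx.2.2 (n - 1) (by omega)
      have hcast : ((n - 1 : ℕ) : ℝ) + 1 = (n : ℝ) := by
        have : (n - 1) + 1 = n := by omega
        exact_mod_cast congrArg (Nat.cast : ℕ → ℝ) this
      rwa [hcast] at this
    obtain ⟨r, hr, hp⟩ := hq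
    refine ⟨min (r / 8) 1, by positivity, min_le_right _ _, Or.inr ?_⟩
    exact psi_mono_r hp (by
      have := min_le_left (r / 8) 1
      linarith [min_le_left (r / 8) 1])

lemma tfun_pos {n : ℕ} {x : X} (hx : x ∈ Ts H F n) : 0 < tfun H F n x := by
  obtain ⟨r, hr⟩ := Rset_nonempty hx
  have := le_csSup (Rset_bddAbove (H := H) (F := F) n x) hr
  have : 0 < sSup (Rset H F n x) := lt_of_lt_of_le hr.1 this
  unfold tfun; linarith

lemma tfun_psi {n : ℕ} {x : X} (hx : x ∈ Ts H F n) (hn : 1 ≤ n) :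
    psi H F x (8 * tfun H F n x) (1 / n) := by
  have hpos := tfun_pos hx
  have hlt : tfun H F n x < sSup (Rset H F n x) := by
    unfold tfun at *; linarith
  obtain ⟨r, hrR, hrgt⟩ := exists_lt_of_lt_csSup (Rset_nonempty hx) hlt
  rcases hrR.2.2 with h0 | hp
  · omega
  · exact psi_mono_r hp (by linarith)

lemma tfun_stab {n : ℕ} {x x' : X} (hx : x ∈ Ts H F n) (hx' : x' ∈ Ts H F n) :
    tfun H F n x - dist x x' / 2 ≤ tfun H F n x' := by
  have hpos' : 0 < sSup (Rset H F n x') := by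
    have := tfun_pos hx'; unfold tfun at this; linarith
  have hkey : sSup (Rset H F n x) ≤ sSup (Rset H F n x') + dist x x' := by
    refine csSup_le (Rset_nonempty hx) (fun r hr => ?_)
    rcases le_or_gt r (dist x x') with h | h
    · linarith
    · have hmem : r - dist x x' ∈ Rset H F n x' := by
        refine ⟨by linarith, by linarith [hr.2.1, dist_nonneg (x := x) (y := x')], ?_⟩
        rcases hr.2.2 with h0 | hp
        · exact Or.inl h0
        · refine Or.inr (fun f hf w z hw hz => ?_)
          have d1 := dist_triangle x x' (w : X)
          have d2 := dist_triangle x x' (z : X)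
          have hd : 0 ≤ dist x x' := dist_nonneg
          exact hp f hf w z (by linarith) (by linarith)
      have := le_csSup (Rset_bddAbove (H := H) (F := F) n x') hmem
      linarith
  unfold tfun; linarith


section Sel

variable [SeparableSpace X] (pt : ↥H)

variable (H F) in
/-- a dense sequence in the stratum `Ts n` (junk if empty) -/
def vseq (pt : ↥H) (n : ℕ) : ℕ → X :=
  if h : (Ts H F n).Nonempty then
    haveI : Nonempty ↥(Ts H F n) := h.to_subtype
    haveI : SeparableSpace ↥(Ts H F n) :=
      (IsSeparable.of_separableSpace (Ts H F n)).separableSpace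
    fun i => ((exists_dense_seq ↥(Ts H F n)).choose i : X)
  else fun _ => (pt : X)

lemma vseq_mem {n : ℕ} (h : (Ts H F n).Nonempty) (i : ℕ) :
    vseq H F pt n i ∈ Ts H F n := by
  rw [vseq, dif_pos h]
  exact Subtype.coe_prop _

lemma vseq_dense {n : ℕ} {y : X} (hy : y ∈ Ts H F n) {η : ℝ} (hη : 0 < η) :
    ∃ i, dist y (vseq H F pt n i) < η := by
  have h : (Ts H F n).Nonempty := ⟨y, hy⟩
  rw [vseq, dif_pos h]
  haveI : Nonempty ↥(Ts H F n) := h.to_subtype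
  haveI : SeparableSpace ↥(Ts H F n) :=
    (IsSeparable.of_separableSpace (Ts H F n)).separableSpace
  have hd := (exists_dense_seq ↥(Ts H F n)).choose_spec
  have hmem : (⟨y, hy⟩ : ↥(Ts H F n)) ∈ closure (range (exists_dense_seq ↥(Ts H F n)).choose) :=
    hd.closure_range ▸ mem_univ _
  obtain ⟨z, ⟨i, hi⟩, hz⟩ := Metric.mem_closure_iff.1 hmem η hη
  refine ⟨i, ?_⟩
  rw [← hi] at hz
  simpa [Subtype.dist_eq] using hz

lemma iex {n : ℕ} {x : X} (hx : x ∈ Ts H F n) :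
    ∃ i, vseq H F pt n i ∈ Ts H F n ∧
      dist x (vseq H F pt n i) < tfun H F n (vseq H F pt n i) := by
  have ht := tfun_pos hx
  obtain ⟨i, hi⟩ := vseq_dense pt hx (half_pos ht)
  have hmem := vseq_mem pt ⟨x, hx⟩ i
  have hst := tfun_stab hx hmem
  exact ⟨i, hmem, by linarith⟩

variable (H F) in
def isel (pt : ↥H) (x : X) : ℕ :=
  if h : ∃ i, vseq H F pt (idx H F x) i ∈ Ts H F (idx H F x) ∧
      dist x (vseq H F pt (idx H F x) i) < tfun H F (idx H F x) (vseq H F pt (idx H F x) i)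
  then Nat.find h else 0

variable (H F) in
def zstar (pt : ↥H) (x : X) : X := vseq H F pt (idx H F x) (isel H F pt x)

lemma zstar_spec {x : X} (hx : x ∈ Ts H F (idx H F x)) :
    zstar H F pt x ∈ Ts H F (idx H F x) ∧
      dist x (zstar H F pt x) < tfun H F (idx H F x) (zstar H F pt x) := by
  have h : ∃ i, vseq H F pt (idx H F x) i ∈ Ts H F (idx H F x) ∧
      dist x (vseq H F pt (idx H F x) i) < tfun H F (idx H F x) (vseq H F pt (idx H F x) i) :=
    iex pt hx
  rw [zstar, isel, dif_pos h]
  exact Nat.find_spec h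

lemma isel_min {x : X} (hx : x ∈ Ts H F (idx H F x)) {i : ℕ}
    (hi : vseq H F pt (idx H F x) i ∈ Ts H F (idx H F x) ∧
      dist x (vseq H F pt (idx H F x) i) < tfun H F (idx H F x) (vseq H F pt (idx H F x) i)) :
    isel H F pt x ≤ i := by
  have h : ∃ i, vseq H F pt (idx H F x) i ∈ Ts H F (idx H F x) ∧
      dist x (vseq H F pt (idx H F x) i) < tfun H F (idx H F x) (vseq H F pt (idx H F x) i) :=
    iex pt hx
  rw [isel, dif_pos h]
  exact Nat.find_min' h hi

variable (H F) in
/-- a point of `H` close to a stratum point -/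
def cpt (pt : ↥H) (n : ℕ) (z : X) : ↥H :=
  if h : ∃ w : ↥H, dist z ↑w < tfun H F n z then h.choose else pt

lemma cpt_spec {n : ℕ} {z : X} (hz : z ∈ Ts H F n) :
    dist z ↑(cpt H F pt n z) < tfun H F n z := by
  have h : ∃ w : ↥H, dist z ↑w < tfun H F n z := by
    obtain ⟨w, hwH, hw⟩ := Metric.mem_closure_iff.1 hz.1 _ (tfun_pos hz)
    exact ⟨⟨w, hwH⟩, hw⟩
  rw [cpt, dif_pos h]
  exact h.choose_spec

end Sel


section Lim

lemma neBot_comap {x : X} (hx : x ∈ closure H) :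
    (comap ((↑) : ↥H → X) (nhds x)).NeBot := by
  rw [comap_neBot_iff]
  intro t ht
  obtain ⟨r, hr, hball⟩ := Metric.mem_nhds_iff.1 ht
  obtain ⟨w, hwH, hw⟩ := Metric.mem_closure_iff.1 hx r hr
  exact ⟨⟨w, hwH⟩, hball (by simpa [mem_ball, dist_comm] using hw)⟩

variable [CompleteSpace Y]

lemma exists_lim {x : X} (hx : x ∈ Gs H F) {f : ↥H → Y} (hf : f ∈ F) :
    ∃ L, Tendsto f (comap ((↑) : ↥H → X) (nhds x)) (nhds L) := by
  haveI := neBot_comap (H := H) hx.1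
  have hc : Cauchy (map f (comap ((↑) : ↥H → X) (nhds x))) := by
    rw [Metric.cauchy_iff]
    refine ⟨map_neBot, fun e he => ?_⟩
    obtain ⟨n, hn⟩ := exists_nat_one_div_lt he
    have hq : x ∈ Qs H F (1 / (n + 1)) := by
      have := hx.2; rw [mem_iInter] at this; exact this n
    obtain ⟨r, hr, hp⟩ := hq
    refine ⟨f '' (((↑) : ↥H → X) ⁻¹' ball x r), image_mem_map ?_, ?_⟩
    · exact preimage_mem_comap (ball_mem_nhds x hr)
    · rintro a ⟨w, hw, rfl⟩ b ⟨z, hz, rfl⟩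
      rw [mem_preimage, mem_ball, dist_comm] at hw hz
      exact lt_of_le_of_lt (hp f hf w z hw hz) hn
  obtain ⟨L, hL⟩ := CompleteSpace.complete hc
  exact ⟨L, hL⟩

variable (H F) in
def extL (pt : ↥H) (f : ↥H → Y) (x : X) : Y :=
  if h : ∃ L, Tendsto f (comap ((↑) : ↥H → X) (nhds x)) (nhds L) then h.choose else f pt

lemma extL_tendsto {pt : ↥H} {f : ↥H → Y} {x : X}
    (h : ∃ L, Tendsto f (comap ((↑) : ↥H → X) (nhds x)) (nhds L)) :
    Tendsto f (comap ((↑) : ↥H → X) (nhds x)) (nhds (extL H pt f x)) := by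
  rw [extL, dif_pos h]; exact h.choose_spec

/-- quantitative bound for the limit value -/
lemma dist_extL {pt : ↥H} {f : ↥H → Y} (hf : f ∈ F) {x : X} (hx : x ∈ closure H)
    (h : ∃ L, Tendsto f (comap ((↑) : ↥H → X) (nhds x)) (nhds L))
    {r e : ℝ} (hp : psi H F x r e) {w : ↥H} (hw : dist x ↑w < r) :
    dist (extL H pt f x) (f w) ≤ e := by
  haveI := neBot_comap (H := H) hx
  have hr : 0 < r := lt_of_le_of_lt dist_nonneg hw
  refine le_of_tendsto ((extL_tendsto h).dist tendsto_const_nhds) ?_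
  have hmem : (((↑) : ↥H → X) ⁻¹' ball x r) ∈ comap ((↑) : ↥H → X) (nhds x) :=
    preimage_mem_comap (ball_mem_nhds x hr)
  filter_upwards [hmem] with q hq
  rw [mem_preimage, mem_ball, dist_comm] at hq
  exact hp f hf q w hq hw

end Lim


section Main

variable (hec : ∀ ε : ℝ, 0 < ε → ∀ x : ↥H, ∃ U ∈ nhds x, ∀ f ∈ F, ∀ y ∈ U, ∀ z ∈ U,
    dist (f y) (f z) < ε)

include hec in
lemma H_subset_Gs : H ⊆ Gs H F := by
  intro x hx
  refine ⟨subset_closure hx, mem_iInter.2 fun n => ?_⟩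
  have hpos : (0:ℝ) < 1 / (n + 1) := by positivity
  obtain ⟨U, hU, hUp⟩ := hec _ hpos ⟨x, hx⟩
  rw [nhds_subtype_eq_comap, mem_comap] at hU
  obtain ⟨V, hV, hVU⟩ := hU
  obtain ⟨r, hr, hball⟩ := Metric.mem_nhds_iff.1 hV
  refine ⟨r, hr, fun f hf w z hw hz => ?_⟩
  have hwU : w ∈ U := hVU (hball (by simpa [mem_ball, dist_comm] using hw))
  have hzU : z ∈ U := hVU (hball (by simpa [mem_ball, dist_comm] using hz))
  exact (hUp f hf w hwU z hzU).le

include hec in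
lemma tendsto_at_H {f : ↥H → Y} (hf : f ∈ F) {x : X} (hx : x ∈ H) :
    Tendsto f (comap ((↑) : ↥H → X) (nhds x)) (nhds (f ⟨x, hx⟩)) := by
  rw [← nhds_subtype_eq_comap (h := hx)]
  rw [Metric.tendsto_nhds]
  intro e he
  obtain ⟨U, hU, hUp⟩ := hec e he ⟨x, hx⟩
  filter_upwards [hU] with q hq
  exact hUp f hf q hq _ (mem_of_mem_nhds hU)

variable [CompleteSpace Y]

include hec in
lemma extL_eq_on_H (pt : ↥H) {f : ↥H → Y} (hf : f ∈ F) {x : X} (hx : x ∈ H) :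
    extL H pt f x = f ⟨x, hx⟩ := by
  haveI := neBot_comap (H := H) (subset_closure hx)
  have h : ∃ L, Tendsto f (comap ((↑) : ↥H → X) (nhds x)) (nhds L) :=
    ⟨f ⟨x, hx⟩, tendsto_at_H hec hf hx⟩
  exact tendsto_nhds_unique (extL_tendsto h) (tendsto_at_H hec hf hx)

variable (H F) in
/-- the extension operator -/
def Efun [SeparableSpace X] (pt : ↥H) (f : ↥H → Y) (x : X) : Y :=
  if x ∈ Gs H F then extL H pt f x
  else if x ∈ closure H then f (cpt H F pt (idx H F x) (zstar H F pt x))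
  else f pt

variable [SeparableSpace X] {pt : ↥H} {f : ↥H → Y}

lemma Efun_eq_G {x : X} (hx : x ∈ Gs H F) : Efun H F pt f x = extL H pt f x := if_pos hx

lemma Efun_eq_T {x : X} (hx : x ∉ Gs H F) (hxc : x ∈ closure H) :
    Efun H F pt f x = f (cpt H F pt (idx H F x) (zstar H F pt x)) := by
  rw [Efun, if_neg hx, if_pos hxc]

lemma Efun_eq_A {x : X} (hx : x ∉ closure H) : Efun H F pt f x = f pt := by
  rw [Efun, if_neg (fun h => hx h.1), if_neg hx]

end Main

end Ext19
/-- An equi-continuous family on a nonempty Gδ subset `H` of a separable metric space,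
with values in a separable complete metric space, extends to an equi-Baire 1 family on
the whole space. -/
theorem stmt_19 {X Y : Type*} [MetricSpace X] [TopologicalSpace.SeparableSpace X]
    [MetricSpace Y] [TopologicalSpace.SeparableSpace Y] [CompleteSpace Y]
    (H : Set X) (hne : H.Nonempty) (hGδ : IsGδ H) (F : Set (↥H → Y))
    (hec : ∀ ε : ℝ, 0 < ε → ∀ x : ↥H, ∃ U ∈ nhds x, ∀ f ∈ F, ∀ y ∈ U, ∀ z ∈ U,
      dist (f y) (f z) < ε) :
    ∃ E : (↥H → Y) → (X → Y),
      (∀ f ∈ F, ∀ x : ↥H, E f (x : X) = f x) ∧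
      (∀ ε : ℝ, 0 < ε → ∃ δ : X → ℝ, (∀ x, 0 < δ x) ∧
        ∀ f ∈ F, ∀ x y : X, dist x y < min (δ x) (δ y) →
          dist (E f x) (E f y) ≤ ε) := by
  classical
  open Ext19 Metric Set Filter in
  obtain ⟨p0, hp0⟩ := hne
  set pt : ↥H := ⟨p0, hp0⟩ with hpt
  refine ⟨Efun H F pt, ?_, ?_⟩
  · intro f hf x
    have hxG : (x : X) ∈ Gs H F := H_subset_Gs hec x.2
    rw [Efun_eq_G hxG, extL_eq_on_H hec pt hf x.2]
  · intro ε hε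
    obtain ⟨N, hN⟩ : ∃ N : ℕ, (1 : ℝ) / (N + 1) < ε / 8 :=
      exists_nat_one_div_lt (by linarith)
    have hδex : ∀ x : X, ∃ d : ℝ, 0 < d ∧
        (x ∈ Gs H F → (∃ r > 0, psi H F x r (ε / 4) ∧ d ≤ r / 4) ∧
          ball x d ⊆ Qs H F (1 / (N + 1))) ∧
        (x ∈ closure H → x ∉ Gs H F →
          (d + dist x (zstar H F pt x) ≤
            tfun H F (idx H F x) (zstar H F pt x)) ∧
          (1 ≤ idx H F x → ball x d ⊆ Qs H F (1 / (idx H F x)))) ∧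
        (x ∉ closure H → ∀ y ∈ closure H, d ≤ dist x y) := by
      intro x
      by_cases hxG : x ∈ Gs H F
      · obtain ⟨n0, hn0⟩ : ∃ n0 : ℕ, (1 : ℝ) / (n0 + 1) < ε / 4 :=
          exists_nat_one_div_lt (by linarith)
        have hq0 : x ∈ Qs H F (1 / (n0 + 1)) := mem_iInter.1 hxG.2 n0
        obtain ⟨r, hr, hp⟩ := hq0
        have hp4 : psi H F x r (ε / 4) := psi_mono_e hp hn0.le
        obtain ⟨ρ, hρ, hρsub⟩ := Qs_ball (mem_iInter.1 hxG.2 N)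
        refine ⟨min (r / 4) ρ, by positivity, fun _ =>
          ⟨⟨r, hr, hp4, min_le_left _ _⟩,
            (ball_subset_ball (min_le_right _ _)).trans hρsub⟩,
          fun _ h2 => absurd hxG h2,
          fun h => absurd (Gs_subset_closure hxG) h⟩
      by_cases hxc : x ∈ closure H
      · have hxT := mem_Ts_idx hxc hxG
        obtain ⟨hzT, hzd⟩ := zstar_spec pt hxT
        have d1pos : 0 < (tfun H F (idx H F x) (zstar H F pt x) - dist x (zstar H F pt x)) / 2 := by
          linarith
        by_cases hn : 1 ≤ idx H F x
        · obtain ⟨ρ, hρ, hsub⟩ := Qs_ball (Ts_mem_Qs hn hxT)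
          refine ⟨min ((tfun H F (idx H F x) (zstar H F pt x) - dist x (zstar H F pt x)) / 2) ρ,
            by positivity, fun h => absurd h hxG, fun _ _ => ⟨?_, fun _ =>
              (ball_subset_ball (min_le_right _ _)).trans hsub⟩,
            fun h => absurd hxc h⟩
          have := min_le_left ((tfun H F (idx H F x) (zstar H F pt x) - dist x (zstar H F pt x)) / 2) ρ
          linarith
        · refine ⟨(tfun H F (idx H F x) (zstar H F pt x) - dist x (zstar H F pt x)) / 2,
            d1pos, fun h => absurd h hxG, fun _ _ => ⟨by linarith, fun h => absurd h hn⟩,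
            fun h => absurd hxc h⟩
      · have hop : IsOpen (closure H)ᶜ := isClosed_closure.isOpen_compl
        obtain ⟨ρ, hρ, hsub⟩ := Metric.mem_nhds_iff.1 (hop.mem_nhds hxc)
        refine ⟨ρ / 2, by linarith, fun h => absurd (Gs_subset_closure h) hxc,
          fun h => absurd h hxc, fun _ y hy => ?_⟩
        by_contra hcon
        push_neg at hcon
        have : y ∈ (closure H)ᶜ := hsub (by
          rw [mem_ball, dist_comm]; linarith)
        exact this hy
    choose δ hδ0 hδG hδT hδA using hδex
    refine ⟨δ, hδ0, ?_⟩
    intro f hf x y hxy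
    rw [lt_min_iff] at hxy
    obtain ⟨hd1, hd2⟩ := hxy
    -- mixed case helper: a ∈ Gs, b in a stratum
    have hmixed : ∀ a b : X, a ∈ Gs H F → b ∈ closure H → b ∉ Gs H F →
        dist a b < δ a → dist a b < δ b →
        dist (Efun H F pt f a) (Efun H F pt f b) ≤ ε := by
      intro a b haG hbc hbG h1 h2
      obtain ⟨⟨r, hr, hp, hdr⟩, hsubN⟩ := hδG a haG
      have hbQ : b ∈ Qs H F (1 / (N + 1)) := hsubN (by
        rw [mem_ball, dist_comm]; exact h1)
      have hbT := mem_Ts_idx hbc hbG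
      have hnN : N < idx H F b := idx_gt hbc hbG hbQ
      have hn1 : 1 ≤ idx H F b := by omega
      obtain ⟨hzT, hzd⟩ := zstar_spec pt hbT
      have ht := tfun_pos hzT
      have hψz := tfun_psi hzT hn1
      have hcz := cpt_spec pt hzT
      obtain ⟨hα, -⟩ := hδT b hbc hbG
      obtain ⟨w, hwH, hw⟩ := Metric.mem_closure_iff.1 (Gs_subset_closure haG)
        (min r (tfun H F (idx H F b) (zstar H F pt b))) (by positivity)
      have hLex := exists_lim haG hf
      have hbd1 : dist (extL H pt f a) (f ⟨w, hwH⟩) ≤ ε / 4 :=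
        dist_extL hf (Gs_subset_closure haG) hLex hp
          (lt_of_lt_of_le hw (min_le_left _ _))
      have hbd2 : dist (f ⟨w, hwH⟩) (f (cpt H F pt (idx H F b) (zstar H F pt b))) ≤
          1 / (idx H F b) := by
        refine hψz f hf ⟨w, hwH⟩ _ ?_ ?_
        · have t1 : dist (zstar H F pt b) w ≤ dist (zstar H F pt b) b + dist b w :=
            dist_triangle _ _ _
          have t2 : dist b w ≤ dist b a + dist a w := dist_triangle _ _ _
          have e1 : dist (zstar H F pt b) b = dist b (zstar H F pt b) := dist_comm _ _
          have e2 : dist b a = dist a b := dist_comm _ _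
          have hw' := lt_of_lt_of_le hw (min_le_right _ _)
          linarith
        · linarith
      have h1n : (1 : ℝ) / (idx H F b) ≤ 1 / (N + 1) := by
        apply one_div_le_one_div_of_le (by positivity)
        exact_mod_cast (by omega : N + 1 ≤ idx H F b)
      rw [Efun_eq_G haG, Efun_eq_T hbG hbc]
      have tri := dist_triangle (extL H pt f a) (f ⟨w, hwH⟩)
        (f (cpt H F pt (idx H F b) (zstar H F pt b)))
      linarith
    by_cases hxc : x ∈ closure H <;> by_cases hyc : y ∈ closure H
    · -- both in closure
      by_cases hxG : x ∈ Gs H F <;> by_cases hyG : y ∈ Gs H F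
      · -- G G
        obtain ⟨⟨rx, hrx, hpx, hdx⟩, -⟩ := hδG x hxG
        obtain ⟨⟨ry, hry, hpy, hdy⟩, -⟩ := hδG y hyG
        obtain ⟨w, hwH, hw⟩ := Metric.mem_closure_iff.1 hyc (min ry (rx / 2))
          (by positivity)
        have hb2 : dist (extL H pt f y) (f ⟨w, hwH⟩) ≤ ε / 4 :=
          dist_extL hf hyc (exists_lim hyG hf) hpy (lt_of_lt_of_le hw (min_le_left _ _))
        have hxw : dist x (w : X) < rx := by
          have t1 : dist x w ≤ dist x y + dist y w := dist_triangle _ _ _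
          have hw' := lt_of_lt_of_le hw (min_le_right _ _)
          linarith
        have hb1 : dist (extL H pt f x) (f ⟨w, hwH⟩) ≤ ε / 4 :=
          dist_extL hf hxc (exists_lim hxG hf) hpx hxw
        rw [Efun_eq_G hxG, Efun_eq_G hyG]
        have tri := dist_triangle (extL H pt f x) (f ⟨w, hwH⟩) (extL H pt f y)
        have e1 : dist (f ⟨w, hwH⟩) (extL H pt f y) = dist (extL H pt f y) (f ⟨w, hwH⟩) :=
          dist_comm _ _
        linarith
      · -- G T
        exact hmixed x y hxG hyc hyG hd1 hd2
      · -- T G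
        have := hmixed y x hyG hxc hxG (by rwa [dist_comm]) (by rwa [dist_comm])
        rwa [dist_comm] at this
      · -- T T
        have hxT := mem_Ts_idx hxc hxG
        have hyT := mem_Ts_idx hyc hyG
        have hle : ∀ a b : X, a ∈ closure H → a ∉ Gs H F → b ∈ closure H → b ∉ Gs H F →
            dist a b < δ a → idx H F a ≤ idx H F b := by
          intro a b hac haG hbc hbG h1
          rcases Nat.eq_zero_or_pos (idx H F a) with h0 | hpos
          · omega
          · have hbQ : b ∈ Qs H F (1 / (idx H F a)) :=
              (hδT a hac haG).2 hpos (by rw [mem_ball, dist_comm]; exact h1)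
            exact idx_ge hbc hbG hpos hbQ
        have hidx : idx H F x = idx H F y :=
          le_antisymm (hle x y hxc hxG hyc hyG hd1)
            (hle y x hyc hyG hxc hxG (by rwa [dist_comm]))
        obtain ⟨hzTx, hzdx⟩ := zstar_spec pt hxT
        obtain ⟨hzTy, hzdy⟩ := zstar_spec pt hyT
        obtain ⟨hαx, -⟩ := hδT x hxc hxG
        obtain ⟨hαy, -⟩ := hδT y hyc hyG
        have hisel : ∀ a b : X, a ∈ closure H → a ∉ Gs H F → b ∈ closure H → b ∉ Gs H F →
            idx H F a = idx H F b → dist a b < δ a →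
            isel H F pt b ≤ isel H F pt a := by
          intro a b hac haG hbc hbG hab h1
          obtain ⟨hzTa, hzda⟩ := zstar_spec pt (mem_Ts_idx hac haG)
          obtain ⟨hαa, -⟩ := hδT a hac haG
          refine isel_min pt (mem_Ts_idx hbc hbG) (i := isel H F pt a) ?_
          rw [← hab]
          refine ⟨hzTa, ?_⟩
          show dist b (zstar H F pt a) < tfun H F (idx H F a) (zstar H F pt a)
          have tri : dist b (zstar H F pt a) ≤ dist b a + dist a (zstar H F pt a) :=
            dist_triangle _ _ _
          have e1 : dist b a = dist a b := dist_comm _ _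
          linarith
        have hiseleq : isel H F pt x = isel H F pt y :=
          le_antisymm (hisel y x hyc hyG hxc hxG hidx.symm (by rwa [dist_comm]))
            (hisel x y hxc hxG hyc hyG hidx hd1)
        have hzeq : zstar H F pt x = zstar H F pt y := by
          rw [zstar, zstar, hidx, hiseleq]
        rw [Efun_eq_T hxG hxc, Efun_eq_T hyG hyc, hidx, hzeq, dist_self]
        linarith
    · exact absurd hd2 (not_lt.2 (by
        rw [dist_comm] at hd2 ⊢
        exact (hδA y hyc x hxc)))
    · exact absurd hd1 (not_lt.2 (hδA x hxc y hyc))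
    · rw [Efun_eq_A hxc, Efun_eq_A hyc, dist_self]
      linarith
end
end
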